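/- arXiv:1909.01499 — 9 statements merged into one kernel-verified Lean document; each statement's English description precedes it below -/
import Mathlib

section
/- Let a, b be integers with a > 0. Then the equation x² − a·y² − b·z² = 1 admits at least one solution (x, y, z) ∈ ℤ³ with x·z ≠ 0. -/
/-! Choosing `y = m z` turns the equation into the Pell equation `x² - (a m² + b) z² = 1`,
so it suffices to find `m` with `a m² + b` positive and not a square. If `a = s²`, take `s m`
large compared with `b`: then `(s m)² + b` lies strictly between two consecutive squares. If `a` is
not a square, take a Pell solution `p² - a q² = 1` with `a q² = n > |b|` and `m = p q`: then
`a m² + b = n² + n + b` lies strictly between `n²` and `(n + 1)²`. -/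

lemma Int.not_isSquare_of_sq_lt_of_lt_sq {n c : ℤ} (hn : 0 ≤ n) (hlt : n ^ 2 < c)
    (hgt : c < (n + 1) ^ 2) : ¬IsSquare c := by
  rintro ⟨k, rfl⟩
  rw [← sq, ← sq_abs k] at hlt hgt
  have := lt_of_pow_lt_pow_left₀ 2 (abs_nonneg k) hlt
  have := lt_of_pow_lt_pow_left₀ 2 (by omega) hgt
  omega

lemma Int.not_isSquare_sq_add {n b : ℤ} (hb : b ≠ 0) (hbn : |b| < n) :
    ¬IsSquare (n ^ 2 + b) := by
  rcases hb.lt_or_gt with hneg | hpos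
  · rw [abs_of_neg hneg] at hbn
    exact Int.not_isSquare_of_sq_lt_of_lt_sq (n := n - 1) (by omega) (by nlinarith) (by nlinarith)
  · rw [abs_of_pos hpos] at hbn
    exact Int.not_isSquare_of_sq_lt_of_lt_sq (n := n) (by omega) (by omega) (by nlinarith)

/-- Squaring a solution in `ℤ√d` maps `(x, y)` to `(2x² - 1, 2xy)`, which makes `d y²` grow. -/
lemma Pell.exists_lt_mul_sq_of_not_isSquare {d : ℤ} (hd₀ : 0 < d) (hd : ¬IsSquare d) (N : ℕ) :
    ∃ x y : ℤ, x ^ 2 - d * y ^ 2 = 1 ∧ N < d * y ^ 2 := by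
  induction N with
  | zero =>
    obtain ⟨x, y, hxy, hy⟩ := Pell.exists_of_not_isSquare hd₀ hd
    exact ⟨x, y, hxy, by positivity⟩
  | succ N ih =>
    obtain ⟨x, y, hxy, hN⟩ := ih
    refine ⟨2 * x ^ 2 - 1, 2 * x * y, by linear_combination 4 * x ^ 2 * hxy, ?_⟩
    have hx : 1 ≤ x ^ 2 := by nlinarith
    push_cast
    nlinarith

lemma exists_pos_not_isSquare_mul_sq_add {a b : ℤ} (ha : 0 < a) (hb : b ≠ 0) :
    ∃ m : ℤ, 0 < a * m ^ 2 + b ∧ ¬IsSquare (a * m ^ 2 + b) := by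
  by_cases hsq : IsSquare a
  · obtain ⟨s, rfl⟩ := hsq
    have hs : 1 ≤ |s| := Int.one_le_abs (by rintro rfl; simp at ha)
    have hm : s * s * (|b| + 1) ^ 2 + b = (|s| * (|b| + 1)) ^ 2 + b := by
      rw [mul_pow, sq_abs]; ring
    have hbn : |b| < |s| * (|b| + 1) := by nlinarith [abs_nonneg b]
    refine ⟨|b| + 1, ?_, ?_⟩ <;> rw [hm]
    · nlinarith [neg_abs_le b]
    · exact Int.not_isSquare_sq_add hb hbn
  obtain ⟨p, q, hpq, hN⟩ := Pell.exists_lt_mul_sq_of_not_isSquare ha hsq b.natAbs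
  rw [Int.natCast_natAbs] at hN
  have hm : a * (p * q) ^ 2 + b = (a * q ^ 2) ^ 2 + (a * q ^ 2) + b := by
    linear_combination (a * q ^ 2) * hpq
  refine ⟨p * q, ?_, ?_⟩ <;> rw [hm]
  · nlinarith [abs_nonneg b, neg_abs_le b]
  · exact Int.not_isSquare_of_sq_lt_of_lt_sq (n := a * q ^ 2) (by positivity)
      (by linarith [neg_abs_le b]) (by linarith [le_abs_self b])

/-- For integers `a > 0` and `b`, the equation `x² - a y² - b z² = 1` has a
solution in integers with `x z ≠ 0`. -/
theorem stmt5 (a b : ℤ) (ha : 0 < a) :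
    ∃ x y z : ℤ, x ^ 2 - a * y ^ 2 - b * z ^ 2 = 1 ∧ x * z ≠ 0 := by
  rcases eq_or_ne b 0 with rfl | hb
  · exact ⟨1, 0, 1, by norm_num, one_ne_zero⟩
  obtain ⟨m, hpos, hnsq⟩ := exists_pos_not_isSquare_mul_sq_add ha hb
  obtain ⟨x, z, hxz, hz⟩ := Pell.exists_of_not_isSquare hpos hnsq
  have hx : x ≠ 0 := by
    rintro rfl
    nlinarith [sq_nonneg z]
  exact ⟨x, m * z, z, by linear_combination hxz, mul_ne_zero hx hz⟩
end

section
/- Let a be a positive integer and b a nonzero integer. Then there exist arbitrarily large integers m such that a·m² + b is not a perfect square. -/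
/-!
If `a m² + b` and `a (m+1)² + b` were both squares, so would be their product, which equals
`P² + a b` with `P = a m (m+1) + b`. For `m > |b|` the nonzero number `a b` is too small to move
`P²` to a neighbouring square, so of two consecutive large `m` at least one works.
-/

theorem Int.not_isSquare_sq_add_s6 {P c : ℤ} (hc₀ : c ≠ 0) (hc : |c| < 2 * P - 1) :
    ¬ IsSquare (P ^ 2 + c) := by
  rintro ⟨s, hs⟩
  have ht : P ^ 2 + c = |s| ^ 2 := by rw [sq_abs, hs, sq]
  have hP : 1 ≤ P := by linarith [Int.one_le_abs hc₀]
  have hlo : P - 1 < |s| :=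
    lt_of_pow_lt_pow_left₀ 2 (abs_nonneg s) (by nlinarith [neg_abs_le c])
  have hhi : |s| < P + 1 :=
    lt_of_pow_lt_pow_left₀ 2 (by linarith) (by nlinarith [le_abs_self c])
  have hsP : |s| = P := by omega
  rw [hsP] at ht
  exact hc₀ (by linarith)

theorem isSquare_sq_add_of_isSquare_consecutive {R : Type*} [CommRing R] {a b m : R}
    (h₀ : IsSquare (a * m ^ 2 + b)) (h₁ : IsSquare (a * (m + 1) ^ 2 + b)) :
    IsSquare ((a * m * (m + 1) + b) ^ 2 + a * b) := by
  have hprod : (a * m * (m + 1) + b) ^ 2 + a * b = (a * m ^ 2 + b) * (a * (m + 1) ^ 2 + b) := by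
    ring
  exact hprod ▸ h₀.mul h₁

theorem Int.abs_mul_lt_of_abs_lt {a b m : ℤ} (ha : 0 < a) (hm : |b| < m) :
    |a * b| < 2 * (a * m * (m + 1) + b) - 1 := by
  rw [abs_mul, abs_of_pos ha]
  have hB := abs_nonneg b
  have hmm : (|b| + 1) * (|b| + 2) ≤ m * (m + 1) :=
    mul_le_mul (by omega) (by omega) (by positivity) (by omega)
  nlinarith [neg_abs_le b, mul_le_mul_of_nonneg_left hmm ha.le, mul_nonneg ha.le (sq_nonneg |b|),
    mul_le_mul_of_nonneg_right (show 1 ≤ a by omega) hB]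

theorem Int.not_isSquare_mul_sq_add_and_succ {a b m : ℤ} (ha : 0 < a) (hb : b ≠ 0)
    (hm : |b| < m) : ¬ (IsSquare (a * m ^ 2 + b) ∧ IsSquare (a * (m + 1) ^ 2 + b)) :=
  fun ⟨h₀, h₁⟩ => Int.not_isSquare_sq_add_s6 (mul_ne_zero ha.ne' hb) (Int.abs_mul_lt_of_abs_lt ha hm)
    (isSquare_sq_add_of_isSquare_consecutive h₀ h₁)

/-- For `a > 0` and `b ≠ 0` integers, there are arbitrarily large integers
`m` with `a m² + b` not a perfect square. -/
theorem stmt6 (a b : ℤ) (ha : 0 < a) (hb : b ≠ 0) :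
    ∀ N : ℤ, ∃ m : ℤ, N ≤ m ∧ ¬ IsSquare (a * m ^ 2 + b) := by
  intro N
  set m := max N (|b| + 1)
  have hm : |b| < m := by omega
  by_cases h : IsSquare (a * m ^ 2 + b)
  · exact ⟨m + 1, by omega, fun h' => Int.not_isSquare_mul_sq_add_and_succ ha hb hm ⟨h, h'⟩⟩
  · exact ⟨m, le_max_left _ _, h⟩
end

section
/- For nonzero vectors x, y, z in ℝ^{n+1}, define dist([x],[y]) = ‖x ∧ y‖ / (‖x‖·‖y‖), where ‖x ∧ y‖ is the norm of the wedge product for the standard Euclidean structure. Then dist satisfies the triangle inequality: dist([x],[z]) ≤ dist([x],[y]) + dist([y],[z]). -/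
/-!
`√(‖x‖²‖y‖² - ⟪x,y⟫²) / (‖x‖‖y‖)` is the sine of the angle between `x` and `y`, and
`‖x‖ sin ∠(x, z)` is the distance from `x` to the line `ℝ z`. Let `s • y` be the orthogonal
projection of `x` on `ℝ y` and `t • z` that of `y` on `ℝ z`. Then
`x - s t z = (x - s y) + s (y - t z)` bounds `‖x‖ sin ∠(x, z)` by
`‖x‖ sin ∠(x, y) + |s| ‖y‖ sin ∠(y, z)`, and `|s| ‖y‖ ≤ ‖x‖` by Cauchy–Schwarz.
-/

open InnerProductGeometry RealInnerProductSpace Real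

section SinAngle

variable {V : Type*} [NormedAddCommGroup V] [InnerProductSpace ℝ V]

lemma sq_sin_angle_mul_norm_mul_norm (x y : V) :
    (sin (angle x y) * (‖x‖ * ‖y‖)) ^ 2 = ‖x‖ ^ 2 * ‖y‖ ^ 2 - ⟪x, y⟫ ^ 2 := by
  rw [mul_pow, sin_sq, ← cos_angle_mul_norm_mul_norm x y]
  ring

lemma sq_norm_mul_sq_norm_sub_smul (x y : V) (r : ℝ) :
    ‖y‖ ^ 2 * ‖x - r • y‖ ^ 2 =
      (‖x‖ ^ 2 * ‖y‖ ^ 2 - ⟪x, y⟫ ^ 2) + (r * ‖y‖ ^ 2 - ⟪x, y⟫) ^ 2 := by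
  rw [norm_sub_sq_real, inner_smul_right, norm_smul, Real.norm_eq_abs, mul_pow, sq_abs]
  ring

lemma sin_angle_mul_norm_le_norm_sub_smul (x y : V) (r : ℝ) :
    sin (angle x y) * ‖x‖ ≤ ‖x - r • y‖ := by
  rcases eq_or_ne y 0 with rfl | hy
  · simp
  have hsq : (sin (angle x y) * (‖x‖ * ‖y‖)) ^ 2 ≤ (‖y‖ * ‖x - r • y‖) ^ 2 := by
    rw [sq_sin_angle_mul_norm_mul_norm, mul_pow, sq_norm_mul_sq_norm_sub_smul]
    nlinarith
  rw [pow_le_pow_iff_left₀ (by positivity [sin_angle_nonneg x y]) (by positivity) two_ne_zero,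
    ← mul_assoc, mul_comm ‖y‖] at hsq
  exact le_of_mul_le_mul_right hsq (norm_pos_iff.mpr hy)

lemma norm_sub_inner_div_norm_sq_smul (x y : V) :
    ‖x - (⟪x, y⟫ / ‖y‖ ^ 2) • y‖ = sin (angle x y) * ‖x‖ := by
  rcases eq_or_ne y 0 with rfl | hy
  · simp
  have hy' : ‖y‖ ≠ 0 := norm_ne_zero_iff.mpr hy
  have hsq : (‖y‖ * ‖x - (⟪x, y⟫ / ‖y‖ ^ 2) • y‖) ^ 2 = (‖y‖ * (sin (angle x y) * ‖x‖)) ^ 2 := by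
    rw [mul_pow, sq_norm_mul_sq_norm_sub_smul, div_mul_cancel₀ _ (pow_ne_zero 2 hy'),
      ← sq_sin_angle_mul_norm_mul_norm]
    ring
  rw [sq_eq_sq₀ (by positivity) (by positivity [sin_angle_nonneg x y])] at hsq
  exact mul_left_cancel₀ hy' hsq

lemma abs_inner_div_norm_sq_mul_norm_le (x y : V) : |⟪x, y⟫ / ‖y‖ ^ 2| * ‖y‖ ≤ ‖x‖ := by
  rcases eq_or_ne y 0 with rfl | hy
  · simp
  have hy' : 0 < ‖y‖ := norm_pos_iff.mpr hy
  rw [abs_div, abs_pow, abs_norm, div_mul_eq_mul_div, div_le_iff₀ (by positivity), sq,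
    ← mul_assoc]
  gcongr
  exact abs_real_inner_le_norm x y

theorem sin_angle_le_sin_angle_add_sin_angle (x y z : V) :
    sin (angle x z) ≤ sin (angle x y) + sin (angle y z) := by
  rcases eq_or_ne x 0 with rfl | hx
  · simp [sin_angle_nonneg]
  set s := ⟪x, y⟫ / ‖y‖ ^ 2
  set t := ⟪y, z⟫ / ‖z‖ ^ 2
  have key : sin (angle x z) * ‖x‖ ≤ (sin (angle x y) + sin (angle y z)) * ‖x‖ := calc
    sin (angle x z) * ‖x‖ ≤ ‖x - (s * t) • z‖ := sin_angle_mul_norm_le_norm_sub_smul x z _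
    _ = ‖(x - s • y) + s • (y - t • z)‖ := by congr 1; module
    _ ≤ ‖x - s • y‖ + |s| * ‖y - t • z‖ := by
      rw [← Real.norm_eq_abs, ← norm_smul]
      exact norm_add_le _ _
    _ = sin (angle x y) * ‖x‖ + |s| * ‖y‖ * sin (angle y z) := by
      rw [norm_sub_inner_div_norm_sq_smul, norm_sub_inner_div_norm_sq_smul]
      ring
    _ ≤ sin (angle x y) * ‖x‖ + ‖x‖ * sin (angle y z) := by
      gcongr
      · exact sin_angle_nonneg y z
      · exact abs_inner_div_norm_sq_mul_norm_le x y
    _ = (sin (angle x y) + sin (angle y z)) * ‖x‖ := by ring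
  exact le_of_mul_le_mul_right key (norm_pos_iff.mpr hx)

lemma sin_angle_eq_sqrt_div {x y : V} (hx : x ≠ 0) (hy : y ≠ 0) :
    sin (angle x y) = √(‖x‖ ^ 2 * ‖y‖ ^ 2 - ⟪x, y⟫ ^ 2) / (‖x‖ * ‖y‖) := by
  rw [sin_angle hx hy, real_inner_self_eq_norm_sq, real_inner_self_eq_norm_sq, ← sq]

end SinAngle

/-- The projective distance `dist([x],[y]) = ‖x ∧ y‖/(‖x‖‖y‖)`, where
`‖x ∧ y‖ = √(‖x‖²‖y‖² - ⟪x,y⟫²)`, satisfies the triangle inequality. -/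
theorem stmt7 (n : ℕ) (x y z : EuclideanSpace ℝ (Fin (n + 1)))
    (hx : x ≠ 0) (hy : y ≠ 0) (hz : z ≠ 0) :
    Real.sqrt (‖x‖ ^ 2 * ‖z‖ ^ 2 - ⟪x, z⟫ ^ 2) / (‖x‖ * ‖z‖) ≤
      Real.sqrt (‖x‖ ^ 2 * ‖y‖ ^ 2 - ⟪x, y⟫ ^ 2) / (‖x‖ * ‖y‖) +
      Real.sqrt (‖y‖ ^ 2 * ‖z‖ ^ 2 - ⟪y, z⟫ ^ 2) / (‖y‖ * ‖z‖) := by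
  rw [← sin_angle_eq_sqrt_div hx hz, ← sin_angle_eq_sqrt_div hx hy, ← sin_angle_eq_sqrt_div hy hz]
  exact sin_angle_le_sin_angle_add_sin_angle x y z
end

section
/- For any vectors u, x, y in ℝ^{n+1} (with the standard inner product), we have ‖(u·x)·y − (u·y)·x‖ ≤ ‖u‖·‖x ∧ y‖, where ‖x ∧ y‖² = ‖x‖²‖y‖² − (x·y)². -/
/-!
Expanding the Gram determinant of `(u, x, y)` along its first row gives
`‖u‖² ‖x ∧ y‖² - ‖(u·x) y - (u·y) x‖²`, and a Gram determinant is nonnegative because the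
Gram matrix is positive semidefinite.
-/

open RealInnerProductSpace

section

variable {E : Type*} [NormedAddCommGroup E] [InnerProductSpace ℝ E]

theorem det_gram_fin_three (u x y : E) :
    (Matrix.gram ℝ ![u, x, y]).det =
      ‖u‖ ^ 2 * (‖x‖ ^ 2 * ‖y‖ ^ 2 - ⟪x, y⟫ ^ 2) - ‖⟪u, x⟫ • y - ⟪u, y⟫ • x‖ ^ 2 := by
  simp only [Matrix.det_fin_three, Matrix.gram_apply, Matrix.cons_val_zero, Matrix.cons_val_one,
    Matrix.cons_val_two, Matrix.head_cons, Matrix.tail_cons, ← real_inner_self_eq_norm_sq,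
    inner_sub_left, inner_sub_right, real_inner_smul_left, real_inner_smul_right]
  rw [real_inner_comm x u, real_inner_comm y u, real_inner_comm y x]
  ring

theorem norm_inner_smul_sub_inner_smul_sq_le (u x y : E) :
    ‖⟪u, x⟫ • y - ⟪u, y⟫ • x‖ ^ 2 ≤ ‖u‖ ^ 2 * (‖x‖ ^ 2 * ‖y‖ ^ 2 - ⟪x, y⟫ ^ 2) := by
  have hdet := (Matrix.posSemidef_gram ℝ ![u, x, y]).det_nonneg
  rw [det_gram_fin_three] at hdet
  linarith

end

/-- For any `u, x, y` in Euclidean space,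
`‖(u·x) y - (u·y) x‖ ≤ ‖u‖ ‖x ∧ y‖` where `‖x ∧ y‖ = √(‖x‖²‖y‖² - (x·y)²)`. -/
theorem stmt8 (n : ℕ) (u x y : EuclideanSpace ℝ (Fin (n + 1))) :
    ‖⟪u, x⟫ • y - ⟪u, y⟫ • x‖ ≤ ‖u‖ * Real.sqrt (‖x‖ ^ 2 * ‖y‖ ^ 2 - ⟪x, y⟫ ^ 2) := by
  rw [← Real.sqrt_sq (norm_nonneg u), ← Real.sqrt_mul (sq_nonneg _)]
  exact Real.le_sqrt_of_sq_le (norm_inner_smul_sub_inner_smul_sq_le u x y)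
end

section
/- Let q be a quadratic form on ℝ^{n+1} with ‖q‖ := max{|q(x)| : ‖x‖ = 1}, and let b be the associated bilinear form. Suppose x, y ∈ ℝ^{n+1} are linearly independent, the span of {x, y} is not totally isotropic (i.e., b(x,y) ≠ 0 or q(x) ≠ 0), and q(y) = 0. Then z := b(x,y)·x − q(x)·y is nonzero, q(z) = 0, and ‖y‖·‖z‖ ≤ 2·‖q‖·‖x ∧ y‖². -/
open RealInnerProductSpace

private lemma aux_exists (p w : ℝ) (h : p ^ 2 + w ^ 2 = 1) :
    ∃ s t : ℝ, s ^ 2 + t ^ 2 = 1 ∧ s ^ 2 = (1 + p) / 2 ∧ 2 * s * t = w := by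
  have hp1 : p ^ 2 ≤ 1 := by nlinarith [sq_nonneg w]
  have hpge : -1 ≤ p := by nlinarith
  by_cases hp : p = -1
  · have hw : w = 0 := by nlinarith
    exact ⟨0, 1, by norm_num, by rw [hp]; norm_num, by simp [hw]⟩
  · have hppos : 0 < 1 + p := by
      rcases lt_or_eq_of_le hpge with h' | h'
      · linarith
      · exact absurd h'.symm hp
    set s := Real.sqrt ((1 + p) / 2) with hs
    have hs2 : s ^ 2 = (1 + p) / 2 := Real.sq_sqrt (by linarith)
    have hspos : 0 < s := Real.sqrt_pos.2 (by linarith)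
    refine ⟨s, w / (2 * s), ?_, hs2, ?_⟩
    · have : (w / (2 * s)) ^ 2 = w ^ 2 / (4 * s ^ 2) := by ring
      rw [this, hs2]
      have hw2 : w ^ 2 = 1 - p ^ 2 := by linarith
      field_simp
      nlinarith
    · field_simp

private lemma key_ineq (α β M : ℝ)
    (h : ∀ s t : ℝ, s ^ 2 + t ^ 2 = 1 → |s ^ 2 * α + s * t * β| ≤ M) :
    α ^ 2 + β ^ 2 ≤ (2 * M) ^ 2 := by
  have hM0 : 0 ≤ M := le_trans (abs_nonneg _) (by simpa using h 1 0 (by norm_num))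
  set r := Real.sqrt (α ^ 2 + β ^ 2) with hrdef
  have hr0 : 0 ≤ r := Real.sqrt_nonneg _
  have hr2 : r ^ 2 = α ^ 2 + β ^ 2 := Real.sq_sqrt (by positivity)
  rcases eq_or_lt_of_le hr0 with hr | hr
  · nlinarith
  · have hrne : r ≠ 0 := ne_of_gt hr
    have hpw : (α / r) ^ 2 + (β / r) ^ 2 = 1 := by field_simp; nlinarith
    -- first direction
    obtain ⟨s, t, hst, hs2, hst2⟩ := aux_exists (α / r) (β / r) hpw
    have h1 : |(α + r) / 2| ≤ M := by
      have := h s t hst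
      have hval : s ^ 2 * α + s * t * β = (α + r) / 2 := by
        rw [hs2]
        have : s * t * β = (β / r) * β / 2 := by
          rw [← hst2]; ring
        rw [this]
        field_simp
        nlinarith
      rwa [hval] at this
    have hpw' : (-(α / r)) ^ 2 + (-(β / r)) ^ 2 = 1 := by rw [← hpw]; ring
    obtain ⟨s', t', hst', hs2', hst2'⟩ := aux_exists (-(α / r)) (-(β / r)) hpw'
    have h2 : |(α - r) / 2| ≤ M := by
      have := h s' t' hst'
      have hval : s' ^ 2 * α + s' * t' * β = (α - r) / 2 := by
        rw [hs2']
        have : s' * t' * β = (-(β / r)) * β / 2 := by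
          rw [← hst2']; ring
        rw [this]
        field_simp
        nlinarith
      rwa [hval] at this
    have h1' : α + r ≤ 2 * M := by
      have := (abs_le.1 h1).2; linarith
    have h2' : r - α ≤ 2 * M := by
      have := (abs_le.1 h2).1
      have habs : -(M) ≤ (α - r)/2 := this
      linarith
    have hr2M : r ≤ 2 * M := by linarith
    nlinarith

set_option maxHeartbeats 1000000 in
/-- Let `q(x) = b(x,x)/2` for a symmetric bilinear form `b` on `ℝ^{n+1}`,
and let `M` bound `|q|` on the unit sphere (i.e. `M = ‖q‖`). If `x, y` are linearly
independent, their span is not totally isotropic (`b(x,y) ≠ 0` or `q(x) ≠ 0`) and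
`q(y) = 0`, then `z = b(x,y) x - q(x) y` is a nonzero zero of `q` and
`‖y‖ ‖z‖ ≤ 2 ‖q‖ ‖x ∧ y‖²`. -/
theorem stmt9 (n : ℕ)
    (b : EuclideanSpace ℝ (Fin (n + 1)) →ₗ[ℝ] EuclideanSpace ℝ (Fin (n + 1)) →ₗ[ℝ] ℝ)
    (hbsymm : ∀ x y, b x y = b y x)
    (q : EuclideanSpace ℝ (Fin (n + 1)) → ℝ) (hq : ∀ x, q x = b x x / 2)
    (M : ℝ) (hM : IsGreatest {r : ℝ | ∃ v, ‖v‖ = 1 ∧ r = |q v|} M)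
    (x y : EuclideanSpace ℝ (Fin (n + 1))) (hind : LinearIndependent ℝ ![x, y])
    (hW : b x y ≠ 0 ∨ q x ≠ 0) (hy : q y = 0) :
    b x y • x - q x • y ≠ 0 ∧ q (b x y • x - q x • y) = 0 ∧
      ‖y‖ * ‖b x y • x - q x • y‖ ≤ 2 * M * (‖x‖ ^ 2 * ‖y‖ ^ 2 - ⟪x, y⟫ ^ 2) := by
  have hpair := LinearIndependent.pair_iff.1 hind
  set c := b x y with hc
  set a := q x with ha
  have hbyy : b y y = 0 := by have := hq y; rw [hy] at this; linarith
  have hbxx : b x x = 2 * a := by have := hq x; linarith [this]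
  -- z ≠ 0
  have hzne : c • x - a • y ≠ 0 := by
    intro h0
    have : c • x + (-a) • y = 0 := by
      rw [neg_smul, ← sub_eq_add_neg]; exact h0
    obtain ⟨h1, h2⟩ := hpair c (-a) this
    rcases hW with h | h
    · exact h h1
    · exact h (by linarith [neg_eq_zero.1 h2])
  refine ⟨hzne, ?_, ?_⟩
  -- q z = 0
  · rw [hq]
    have : b (c • x - a • y) (c • x - a • y)
        = c * c * b x x - c * a * b x y - a * c * b y x + a * a * b y y := by
      simp [map_sub, map_smul, LinearMap.sub_apply, LinearMap.smul_apply, smul_eq_mul]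
      ring
    rw [this, hbsymm y x, hbxx, hbyy, ← hc]
    ring
  -- inequality
  · have hy0 : y ≠ 0 := by
      intro h0
      have : (0 : ℝ) • x + (1 : ℝ) • y = 0 := by simp [h0]
      exact one_ne_zero (hpair 0 1 this).2
    have hyn : (0 : ℝ) < ‖y‖ := norm_pos_iff.2 hy0
    set t0 : ℝ := -⟪x, y⟫ / ‖y‖ ^ 2 with ht0
    set x' := x + t0 • y with hx'
    have hx'0 : x' ≠ 0 := by
      intro h0
      have : (1 : ℝ) • x + t0 • y = 0 := by rw [one_smul]; exact h0
      exact one_ne_zero (hpair 1 t0 this).1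
    have hx'n : (0 : ℝ) < ‖x'‖ := norm_pos_iff.2 hx'0
    have hx'y : ⟪x', y⟫ = 0 := by
      rw [hx', inner_add_left, real_inner_smul_left, ht0, real_inner_self_eq_norm_sq]
      field_simp
      ring
    have hbx'y : b x' y = c := by
      rw [hx']; simp [map_add, map_smul, hbyy, hc]
    have hqx' : q x' = a + t0 * c := by
      rw [hq, hx']
      simp only [map_add, map_smul, LinearMap.add_apply, LinearMap.smul_apply, smul_eq_mul]
      rw [hbsymm y x]
      rw [hbxx, hbyy, ← hc]
      ring
    set a' := q x' with ha'
    have hzeq : c • x - a • y = c • x' - a' • y := by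
      rw [hx', hqx']
      module
    -- norm of z
    have hnz : ‖c • x' - a' • y‖ ^ 2 = c ^ 2 * ‖x'‖ ^ 2 + a' ^ 2 * ‖y‖ ^ 2 := by
      rw [norm_sub_sq_real, real_inner_smul_left, real_inner_smul_right, hx'y,
        norm_smul, norm_smul]
      simp [mul_pow, sq_abs]
    -- bounds lemma
    have hM0 : 0 ≤ M := by
      obtain ⟨v, hv, hveq⟩ := hM.1
      rw [hveq]; exact abs_nonneg _
    set α := a' / ‖x'‖ ^ 2 with hα
    set β := c / (‖x'‖ * ‖y‖) with hβ
    have hkey : α ^ 2 + β ^ 2 ≤ (2 * M) ^ 2 := by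
      apply key_ineq
      intro s t hst
      set v := (s / ‖x'‖) • x' + (t / ‖y‖) • y with hv
      have hvn : ‖v‖ = 1 := by
        have : ‖v‖ ^ 2 = 1 := by
          rw [hv, norm_add_sq_real, real_inner_smul_left, real_inner_smul_right, hx'y,
            norm_smul, norm_smul]
          simp [mul_pow, sq_abs]
          field_simp
          linarith [hst, sq_abs s, sq_abs t]
        nlinarith [norm_nonneg v]
      have hqv : q v = s ^ 2 * α + s * t * β := by
        rw [hq, hv]
        simp only [map_add, map_smul, LinearMap.add_apply, LinearMap.smul_apply, smul_eq_mul]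
        rw [hbsymm y x']
        have hbx'x' : b x' x' = 2 * a' := by have := hq x'; rw [← ha'] at this; linarith
        rw [hbx'x', hbyy, hbx'y, hα, hβ]
        field_simp
        ring
      have : |q v| ≤ M := hM.2 ⟨v, hvn, rfl⟩
      rwa [hqv] at this
    -- turn into norm bound
    have hx2 : ‖x'‖ ^ 2 ≠ 0 := by positivity
    have hαval : α ^ 2 = a' ^ 2 / ‖x'‖ ^ 4 := by rw [hα]; ring
    have hβval : β ^ 2 = c ^ 2 / (‖x'‖ ^ 2 * ‖y‖ ^ 2) := by rw [hβ]; ring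
    have hbig : c ^ 2 * ‖x'‖ ^ 2 + a' ^ 2 * ‖y‖ ^ 2 ≤ (2 * M) ^ 2 * ‖x'‖ ^ 4 * ‖y‖ ^ 2 := by
      rw [hαval, hβval] at hkey
      have h4 : (0:ℝ) < ‖x'‖ ^ 4 * ‖y‖ ^ 2 := by positivity
      rw [div_add_div _ _ (by positivity) (by positivity), div_le_iff₀ (by positivity)] at hkey
      nlinarith [hkey, sq_nonneg (‖x'‖ * ‖y‖), hx'n, hyn]
    have hznorm : ‖c • x' - a' • y‖ ≤ 2 * M * (‖x'‖ ^ 2 * ‖y‖) := by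
      have h1 : ‖c • x' - a' • y‖ ^ 2 ≤ (2 * M * (‖x'‖ ^ 2 * ‖y‖)) ^ 2 := by
        rw [hnz]; nlinarith [hbig]
      have h2 : (0:ℝ) ≤ 2 * M * (‖x'‖ ^ 2 * ‖y‖) := by positivity
      nlinarith [norm_nonneg (c • x' - a' • y)]
    have hx'norm : ‖x'‖ ^ 2 * ‖y‖ ^ 2 = ‖x‖ ^ 2 * ‖y‖ ^ 2 - ⟪x, y⟫ ^ 2 := by
      rw [hx', norm_add_sq_real, real_inner_smul_right, norm_smul]
      simp only [mul_pow, sq_abs, Real.norm_eq_abs]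
      rw [ht0]
      field_simp
      ring
    rw [hzeq]
    calc ‖y‖ * ‖c • x' - a' • y‖ ≤ ‖y‖ * (2 * M * (‖x'‖ ^ 2 * ‖y‖)) := by
          exact mul_le_mul_of_nonneg_left hznorm (norm_nonneg y)
      _ = 2 * M * (‖x'‖ ^ 2 * ‖y‖ ^ 2) := by ring
      _ = 2 * M * (‖x‖ ^ 2 * ‖y‖ ^ 2 - ⟪x, y⟫ ^ 2) := by rw [hx'norm]
end

section
/- Let ξ be a point of the unit sphere in ℝ^{n+1} and (x_i)_{i≥1} a sequence of nonzero integer vectors in ℤ^{n+1} with ‖x_i ∧ ξ‖ → 0 as i → ∞. Then the coordinates of ξ are linearly independent over ℚ if and only if, for every i₀ ≥ 1, the vectors (x_i)_{i≥i₀} span ℚ^{n+1}. -/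
open RealInnerProductSpace

/-- The real vector associated to an integer vector. -/
def zToR (n : ℕ) (v : Fin (n + 1) → ℤ) : EuclideanSpace ℝ (Fin (n + 1)) :=
  WithLp.toLp 2 (fun i => (v i : ℝ))

/-- The real vector associated to a rational vector. -/
def qToR (n : ℕ) (v : Fin (n + 1) → ℚ) : EuclideanSpace ℝ (Fin (n + 1)) :=
  WithLp.toLp 2 (fun i => (v i : ℝ))


lemma inner_qz (n : ℕ) (u : Fin (n+1) → ℚ) (v : Fin (n+1) → ℤ) :
    ⟪qToR n u, zToR n v⟫ = ((∑ j, u j * (v j : ℚ) : ℚ) : ℝ) := by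
  rw [PiLp.inner_apply]
  push_cast
  simp [qToR, zToR, RCLike.inner_apply, mul_comm]

lemma norm_e (n : ℕ) (ξ y : EuclideanSpace ℝ (Fin (n+1))) (hξ : ‖ξ‖ = 1) :
    ‖y - ⟪y, ξ⟫ • ξ‖ ^ 2 = ‖y‖ ^ 2 - ⟪y, ξ⟫ ^ 2 := by
  have h1 : ⟪y, (⟪y, ξ⟫ : ℝ) • ξ⟫ = ⟪y, ξ⟫ ^ 2 := by
    rw [real_inner_smul_right]; ring
  have h2 : ‖(⟪y, ξ⟫ : ℝ) • ξ‖ ^ 2 = ⟪y, ξ⟫ ^ 2 := by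
    rw [norm_smul, hξ]; simp [sq_abs]
  rw [norm_sub_sq_real, h1, h2]; ring

noncomputable def coefFun (n : ℕ) (v : Fin (n+1) → ℚ) : (Fin (n+1) → ℚ) →ₗ[ℚ] ℚ :=
  ∑ j, v j • LinearMap.proj j

lemma coefFun_apply (n : ℕ) (v : Fin (n+1) → ℚ) (w : Fin (n+1) → ℚ) :
    coefFun n v w = ∑ j, v j * w j := by
  simp [coefFun]

lemma coefFun_single (n : ℕ) (v : Fin (n+1) → ℚ) (k : Fin (n+1)) :
    coefFun n v (Pi.single k 1) = v k := by
  rw [coefFun_apply]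
  simp [Pi.single_apply]

/-- Let `ξ` be a unit vector of `ℝ^{n+1}` and `(x_i)` a sequence of
nonzero integer vectors with `‖x_i ∧ ξ‖ → 0`.  Then the coordinates of `ξ` are linearly
independent over `ℚ` (i.e. `u·ξ ≠ 0` for every nonzero rational `u`) iff for every
`i₀` the vectors `(x_i)_{i ≥ i₀}` span `ℚ^{n+1}`. -/
theorem stmt11 (n : ℕ) (ξ : EuclideanSpace ℝ (Fin (n + 1))) (hξ : ‖ξ‖ = 1)
    (x : ℕ → Fin (n + 1) → ℤ) (hx0 : ∀ i, x i ≠ 0)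
    (htend : Filter.Tendsto
      (fun i => Real.sqrt (‖zToR n (x i)‖ ^ 2 * ‖ξ‖ ^ 2 - ⟪zToR n (x i), ξ⟫ ^ 2))
      Filter.atTop (nhds 0)) :
    (∀ u : Fin (n + 1) → ℚ, u ≠ 0 → ⟪qToR n u, ξ⟫ ≠ 0) ↔
      (∀ i₀ : ℕ, Submodule.span ℚ
        (Set.range fun i : ℕ => fun j => ((x (i₀ + i) j : ℚ))) = ⊤) := by
  set e : ℕ → EuclideanSpace ℝ (Fin (n+1)) :=
    fun i => zToR n (x i) - ⟪zToR n (x i), ξ⟫ • ξ with he_def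
  have hnorm_e : ∀ i, ‖e i‖ ^ 2 = ‖zToR n (x i)‖ ^ 2 - ⟪zToR n (x i), ξ⟫ ^ 2 :=
    fun i => norm_e n ξ (zToR n (x i)) hξ
  have he_tend : Filter.Tendsto (fun i => ‖e i‖) Filter.atTop (nhds 0) := by
    convert htend using 2 with i
    rw [hξ, one_pow, mul_one, ← hnorm_e i, Real.sqrt_sq (norm_nonneg _)]
  have hx_ge : ∀ i, 1 ≤ ‖zToR n (x i)‖ := by
    intro i
    obtain ⟨j, hj⟩ := Function.ne_iff.mp (hx0 i)
    have h1 : (1:ℝ) ≤ ‖zToR n (x i) j‖ ^ 2 := by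
      have : (1:ℝ) ≤ |(x i j : ℝ)| := by exact_mod_cast Int.one_le_abs hj
      simp only [zToR, PiLp.toLp_apply, Real.norm_eq_abs]
      nlinarith
    have h2 : ‖zToR n (x i) j‖ ^ 2 ≤ ‖zToR n (x i)‖ ^ 2 := by
      rw [EuclideanSpace.norm_eq, Real.sq_sqrt (by positivity)]
      exact Finset.single_le_sum (f := fun k => ‖zToR n (x i) k‖ ^ 2)
        (fun k _ => by positivity) (Finset.mem_univ j)
    nlinarith [norm_nonneg (zToR n (x i))]
  have hdecomp : ∀ (u : Fin (n+1) → ℚ) (i : ℕ),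
      ((∑ j, u j * (x i j : ℚ) : ℚ) : ℝ)
        = ⟪qToR n u, e i⟫ + ⟪zToR n (x i), ξ⟫ * ⟪qToR n u, ξ⟫ := by
    intro u i
    have h2 : ⟪qToR n u, e i⟫
        = ⟪qToR n u, zToR n (x i)⟫ - ⟪zToR n (x i), ξ⟫ * ⟪qToR n u, ξ⟫ := by
      simp only [he_def]
      rw [inner_sub_right, real_inner_smul_right]
    rw [← inner_qz, h2]; ring
  constructor
  · -- independence → spans
    intro hind i₀
    by_contra hne
    obtain ⟨f, hf0, hfmap⟩ := Submodule.exists_dual_map_eq_bot_of_lt_top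
      (lt_top_iff_ne_top.mpr hne) inferInstance
    set u : Fin (n+1) → ℚ := fun j => f (Pi.single j 1) with hu_def
    have hfu : ∀ w, f w = ∑ j, u j * w j := by
      intro w
      conv_lhs => rw [← Finset.univ_sum_single w]
      rw [map_sum]
      refine Finset.sum_congr rfl fun j _ => ?_
      have hw : Pi.single j (w j) = w j • (Pi.single j 1 : Fin (n+1) → ℚ) := by
        ext k
        rcases eq_or_ne k j with rfl | hk
        · simp
        · simp [Pi.single_apply, hk]
      rw [hw, map_smul, smul_eq_mul, hu_def, mul_comm]
    have hu0 : u ≠ 0 := by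
      intro h
      apply hf0
      apply LinearMap.ext
      intro w
      simp [hfu, h]
    have hvanish : ∀ i, (∑ j, u j * (x (i₀ + i) j : ℚ)) = 0 := by
      intro i
      have hmem : (fun j => ((x (i₀ + i) j : ℚ))) ∈
          Submodule.span ℚ (Set.range fun i : ℕ => fun j => ((x (i₀ + i) j : ℚ))) :=
        Submodule.subset_span ⟨i, rfl⟩
      have := (Submodule.eq_bot_iff _).mp hfmap (f (fun j => ((x (i₀ + i) j : ℚ))))
        ⟨_, hmem, rfl⟩
      rwa [hfu] at this
    set c : ℝ := ⟪qToR n u, ξ⟫ with hc_def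
    have hc : c ≠ 0 := hind u hu0
    set U : ℝ := ‖qToR n u‖ with hU_def
    have hU0 : 0 ≤ U := norm_nonneg _
    set δ : ℝ := min (1/2) (|c| / (2 * U + 1)) with hδ_def
    have hδ0 : 0 < δ := by
      apply lt_min (by norm_num)
      apply div_pos (abs_pos.mpr hc)
      linarith
    obtain ⟨N, hN⟩ := Metric.tendsto_atTop.mp he_tend δ hδ0
    have hm : ‖e (i₀ + N)‖ < δ := by
      have := hN (i₀ + N) (by omega)
      rwa [Real.dist_eq, sub_zero, abs_of_nonneg (norm_nonneg _)] at this
    have hsum0 : (∑ j, u j * ((x (i₀ + N) j : ℚ))) = 0 := hvanish N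
    have hkey := hdecomp u (i₀ + N)
    rw [hsum0, Rat.cast_zero] at hkey
    have hbound : |⟪zToR n (x (i₀ + N)), ξ⟫| * |c| ≤ U * ‖e (i₀ + N)‖ := by
      have h1 : |⟪qToR n u, e (i₀ + N)⟫| ≤ U * ‖e (i₀ + N)‖ := abs_real_inner_le_norm _ _
      have h2 : |⟪zToR n (x (i₀ + N)), ξ⟫ * c| = |⟪qToR n u, e (i₀ + N)⟫| := by
        rw [show ⟪zToR n (x (i₀ + N)), ξ⟫ * c = -⟪qToR n u, e (i₀ + N)⟫ by linarith, abs_neg]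
      rw [← abs_mul, h2]; exact h1
    have hlow : (1/2 : ℝ) ≤ |⟪zToR n (x (i₀ + N)), ξ⟫| := by
      have h1 := hnorm_e (i₀ + N)
      have h2 := hx_ge (i₀ + N)
      have h3 : ‖e (i₀ + N)‖ < 1/2 := lt_of_lt_of_le hm (min_le_left _ _)
      nlinarith [abs_nonneg (⟪zToR n (x (i₀ + N)), ξ⟫), sq_abs (⟪zToR n (x (i₀ + N)), ξ⟫),
        norm_nonneg (e (i₀ + N))]
    have habs : 0 < |c| := abs_pos.mpr hc
    have h6 : (1/2) * |c| ≤ U * ‖e (i₀ + N)‖ :=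
      le_trans (mul_le_mul_of_nonneg_right hlow (abs_nonneg c)) hbound
    have h7 : U * ‖e (i₀ + N)‖ ≤ U * δ := mul_le_mul_of_nonneg_left hm.le hU0
    have h8 : δ * (2 * U + 1) ≤ |c| := by
      have := min_le_right (1/2 : ℝ) (|c| / (2 * U + 1))
      rw [← hδ_def] at this
      exact (le_div_iff₀ (by linarith)).mp this
    nlinarith
  · -- spans → independence
    intro hspan u hu0 h0
    set D : ℕ := ∏ j, (u j).den with hD_def
    have hDpos : 0 < D := Finset.prod_pos fun j _ => (u j).pos
    have hD0 : (D:ℚ) ≠ 0 := by exact_mod_cast hDpos.ne'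
    set v : Fin (n+1) → ℤ := fun j => (u j).num * ((D / (u j).den : ℕ) : ℤ) with hv_def
    have hv : ∀ j, ((v j : ℚ)) = (D : ℚ) * u j := by
      intro j
      have hdvd : (u j).den ∣ D := Finset.dvd_prod_of_mem _ (Finset.mem_univ j)
      have hden : ((u j).den : ℚ) ≠ 0 := by exact_mod_cast (u j).pos.ne'
      have hcast : (((D / (u j).den : ℕ)) : ℚ) = (D : ℚ) / ((u j).den : ℚ) :=
        Nat.cast_div hdvd hden
      show ((((u j).num * ((D / (u j).den : ℕ) : ℤ)) : ℤ) : ℚ) = (D : ℚ) * u j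
      rw [Int.cast_mul, Int.cast_natCast, hcast]
      conv_rhs => rw [← Rat.num_div_den (u j)]
      field_simp
    have hv0 : v ≠ 0 := by
      obtain ⟨j, hj⟩ := Function.ne_iff.mp hu0
      intro h
      have h1 := hv j
      rw [show v j = 0 from by simp [h]] at h1
      have h2 : (D:ℚ) * u j = 0 := by exact_mod_cast h1.symm
      have h3 : u j = 0 := (mul_eq_zero.mp h2).resolve_left hD0
      exact hj (by simpa using h3)
    set u' : Fin (n+1) → ℚ := fun j => (v j : ℚ) with hu'_def
    have hq : qToR n u' = (D : ℝ) • qToR n u := by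
      ext j
      show ((u' j : ℚ) : ℝ) = (D:ℝ) * ((u j : ℚ) : ℝ)
      rw [hu'_def]
      push_cast [hv j]
      ring
    have hinner0 : ⟪qToR n u', ξ⟫ = 0 := by
      rw [hq, real_inner_smul_left, h0, mul_zero]
    set S : ℕ → ℤ := fun i => ∑ j, v j * x i j with hS_def
    have hSq : ∀ i, ((S i : ℤ) : ℚ) = ∑ j, u' j * ((x i j : ℚ)) := by
      intro i
      rw [hS_def]
      push_cast
      rfl
    have hS : ∀ i, ((S i : ℤ) : ℝ) = ⟪qToR n u', e i⟫ := by
      intro i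
      have h1 := hdecomp u' i
      rw [hinner0, mul_zero, add_zero, ← hSq i] at h1
      rw [← h1]
      push_cast
      ring
    set U : ℝ := ‖qToR n u'‖ with hU_def
    have hU0 : 0 ≤ U := norm_nonneg _
    have hδ0 : (0:ℝ) < 1 / (U + 1) := by positivity
    obtain ⟨N, hN⟩ := Metric.tendsto_atTop.mp he_tend (1 / (U + 1)) hδ0
    have hSzero : ∀ i, N ≤ i → S i = 0 := by
      intro i hi
      have h1 : ‖e i‖ < 1 / (U + 1) := by
        have := hN i hi
        rwa [Real.dist_eq, sub_zero, abs_of_nonneg (norm_nonneg _)] at this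
      have h2 : |((S i : ℤ) : ℝ)| ≤ U * ‖e i‖ := by
        rw [hS i]; exact abs_real_inner_le_norm _ _
      have h3 : |((S i : ℤ) : ℝ)| < 1 := by
        have hl : U * ‖e i‖ < U * (1 / (U + 1)) + 1/(U+1) := by
          rcases eq_or_lt_of_le hU0 with h | h
          · rw [← h]; simpa using hδ0
          · nlinarith [norm_nonneg (e i)]
        have hlt : U * (1 / (U+1)) + 1/(U+1) = 1 := by field_simp
        linarith
      have h4 : |S i| < 1 := by
        exact_mod_cast (by rwa [← Int.cast_abs] at h3 : ((|S i| : ℤ) : ℝ) < 1)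
      have := abs_lt.mp h4
      omega
    have hspanN := hspan N
    have hgen : ∀ w ∈ (Set.range fun i : ℕ => fun j => ((x (N + i) j : ℚ))),
        w ∈ LinearMap.ker (coefFun n u') := by
      rintro w ⟨i, rfl⟩
      rw [LinearMap.mem_ker, coefFun_apply]
      have key : (∑ j, u' j * ((x (N + i) j : ℚ))) = 0 := by
        rw [← hSq (N + i), hSzero (N + i) (Nat.le_add_right N i), Int.cast_zero]
      simpa using key
    have htop : (⊤ : Submodule ℚ (Fin (n+1) → ℚ)) ≤ LinearMap.ker (coefFun n u') := by
      rw [← hspanN]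
      exact Submodule.span_le.mpr hgen
    have hall : ∀ k, v k = 0 := by
      intro k
      have h5 := htop (Submodule.mem_top (x := (Pi.single k 1 : Fin (n+1) → ℚ)))
      rw [LinearMap.mem_ker, coefFun_single] at h5
      have h6 : ((v k : ℤ) : ℚ) = 0 := h5
      exact_mod_cast h6
    exact hv0 (funext hall)
end

section
/- Let V be a finite-dimensional complex inner product space, T : V → V a linear operator whose minimal polynomial has a simple root α with |α| > 1, and such that every other complex root β of the minimal polynomial either satisfies |β| < 1 or is simple with |β| = 1. Let (v_i)_{i≥1} be a sequence in V with Σ_{i≥1} ‖v_{i+1} − T(v_i)‖ < ∞. Then there exist v ∈ V with T(v) = α·v and a constant C > 0 such that ‖v_i − α^i·v‖ ≤ C for every i ≥ 1. -/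
open Polynomial Filter Finset

section Aux

variable {V : Type*} [AddCommGroup V] [Module ℂ V]

lemma eigen_of_simple_root (T : V →ₗ[ℂ] V) {μ : ℂ}
    (hμ : (minpoly ℂ T).rootMultiplicity μ = 1)
    {x : V} (hx : x ∈ Module.End.maxGenEigenspace T μ) : T x = μ • x := by
  obtain ⟨k, hk⟩ := (Module.End.mem_maxGenEigenspace T μ x).mp hx
  set p := minpoly ℂ T with hp
  have hp0 : p ≠ 0 := by
    intro h
    rw [h, rootMultiplicity_zero] at hμ
    exact one_ne_zero hμ.symm
  have hroot : p.IsRoot μ := by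
    rw [← rootMultiplicity_pos hp0, hμ]; norm_num
  set q := p /ₘ (X - C μ) with hq
  have hpq : (X - C μ) * q = p := mul_divByMonic_eq_iff_isRoot.mpr hroot
  have hqnd : ¬ (X - C μ ∣ q) := by
    intro hdvd
    obtain ⟨r, hr⟩ := hdvd
    have h2 : (X - C μ) ^ 2 ∣ p := ⟨r, by rw [← hpq, hr]; ring⟩
    have := (le_rootMultiplicity_iff hp0).mpr h2
    omega
  have hcop : IsCoprime ((X - C μ) ^ k) q :=
    (((irreducible_X_sub_C μ).coprime_iff_not_dvd).mpr hqnd).pow_left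
  obtain ⟨a, b, hab⟩ := hcop
  have haev : aeval T (X - C μ) = T - μ • (1 : Module.End ℂ V) := by
    simp [Module.algebraMap_end_eq_smul_id]
    rfl
  have hkx : (aeval T ((X - C μ) ^ k)) x = 0 := by
    rw [map_pow, haev]; exact hk
  have hx2 : (aeval T b) ((aeval T q) x) = x := by
    have h := congrArg (fun r : ℂ[X] => (aeval T r) x) hab
    simp only [map_add, map_mul, Module.End.mul_apply, LinearMap.add_apply, map_one,
      Module.End.one_apply] at h
    rw [hkx, map_zero, zero_add] at h
    exact h
  have h3 : (T - μ • (1 : Module.End ℂ V)) x = 0 := by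
    have e1 : (aeval T ((X - C μ) * (b * q))) x = (T - μ • (1 : Module.End ℂ V)) x := by
      rw [map_mul, Module.End.mul_apply, map_mul, Module.End.mul_apply, hx2, haev]
    have e2 : (X - C μ) * (b * q) = b * p := by rw [← hpq]; ring
    rw [← e1, e2, map_mul, Module.End.mul_apply, hp, minpoly.aeval, LinearMap.zero_apply, map_zero]
  rw [LinearMap.sub_apply, LinearMap.smul_apply, Module.End.one_apply, sub_eq_zero] at h3
  exact h3

lemma isRoot_of_mem_maxGen [FiniteDimensional ℂ V] (T : V →ₗ[ℂ] V) {μ : ℂ} {x : V}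
    (hx : x ∈ Module.End.maxGenEigenspace T μ) (hx0 : x ≠ 0) : (minpoly ℂ T).IsRoot μ := by
  apply Module.End.isRoot_of_hasEigenvalue
  obtain ⟨k, hk⟩ := (Module.End.mem_maxGenEigenspace T μ x).mp hx
  refine Module.End.hasEigenvalue_of_hasGenEigenvalue (k := k) ?_
  intro hbot
  have hmem : x ∈ Module.End.genEigenspace T μ (k : ℕ∞) :=
    Module.End.mem_genEigenspace_nat.mpr hk
  rw [hbot] at hmem
  exact hx0 (by simpa using hmem)

lemma pow_apply_eigen (T : V →ₗ[ℂ] V) {μ : ℂ} {z : V} (h : T z = μ • z) :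
    ∀ n : ℕ, (T ^ n) z = μ ^ n • z := by
  intro n
  induction n with
  | zero => simp
  | succ n ih =>
    rw [pow_succ, Module.End.mul_apply, h, map_smul, ih, smul_smul, ← pow_succ']

end Aux

section Aux2

variable {V : Type*} [NormedAddCommGroup V] [NormedSpace ℂ V]

lemma choose_geom_tendsto (j : ℕ) {r : ℝ} (h0 : 0 ≤ r) (h1 : r < 1) :
    Tendsto (fun n : ℕ => (n.choose j : ℝ) * r ^ (n - j)) atTop (nhds 0) := by
  rcases eq_or_lt_of_le h0 with h0 | h0
  · apply Tendsto.congr' (f₁ := fun _ => 0)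
    · filter_upwards [eventually_gt_atTop j] with n hn
      rw [← h0, zero_pow (by omega)]
      ring
    · exact tendsto_const_nhds
  · have hsum : Tendsto (fun n : ℕ => (n : ℝ) ^ j * r ^ n) atTop (nhds 0) :=
      (summable_pow_mul_geometric_of_norm_lt_one (R := ℝ) j
        (by rwa [Real.norm_eq_abs, abs_of_pos h0])).tendsto_atTop_zero
    have hsum2 : Tendsto (fun n : ℕ => (n : ℝ) ^ j * r ^ n * (r ^ j)⁻¹) atTop (nhds 0) := by
      simpa using hsum.mul_const (r ^ j)⁻¹
    apply squeeze_zero' (g := fun n : ℕ => (n : ℝ) ^ j * r ^ n * (r ^ j)⁻¹)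
      (Eventually.of_forall fun n => by positivity) _ hsum2
    filter_upwards [eventually_ge_atTop j] with n hn
    have hrw : r ^ (n - j) = r ^ n * (r ^ j)⁻¹ := pow_sub₀ _ (ne_of_gt h0) hn
    rw [hrw, ← mul_assoc]
    have hc : (n.choose j : ℝ) ≤ (n : ℝ) ^ j := by
      exact_mod_cast Nat.choose_le_pow n j
    gcongr

/-- Powers of `T` applied to a vector of a generalized eigenspace with small
eigenvalue tend to zero, in particular are bounded. -/
lemma bdd_pow_small (T : V →ₗ[ℂ] V) {μ : ℂ} (hμ : ‖μ‖ < 1)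
    {y : V} (hy : y ∈ Module.End.maxGenEigenspace T μ) :
    ∃ B : ℝ, ∀ n : ℕ, ‖(T ^ n) y‖ ≤ B := by
  obtain ⟨m, hm⟩ := (Module.End.mem_maxGenEigenspace T μ y).mp hy
  set N : Module.End ℂ V := T - μ • 1 with hN
  have hcomm : Commute N (μ • (1 : Module.End ℂ V)) := (Commute.one_right N).smul_right μ
  have hT : T = N + μ • (1 : Module.End ℂ V) := by rw [hN]; abel
  have key : ∀ n : ℕ, (T ^ n) y
      = ∑ j ∈ Finset.range (n + 1), n.choose j • μ ^ (n - j) • ((N ^ j) y) := by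
    intro n
    have h := congrArg (fun f : Module.End ℂ V => f y) (hT ▸ Commute.add_pow hcomm n)
    simp only [LinearMap.sum_apply, Module.End.mul_apply, LinearMap.smul_apply,
      Module.End.one_apply, _root_.smul_pow, one_pow, Module.End.natCast_apply, map_smul,
      map_nsmul, Nat.cast_smul_eq_nsmul] at h
    exact h
  have key2 : ∀ n : ℕ, m ≤ n →
      (T ^ n) y = ∑ j ∈ Finset.range m, n.choose j • μ ^ (n - j) • ((N ^ j) y) := by
    intro n hn
    rw [key n]
    symm
    apply Finset.sum_subset (Finset.range_subset_range.mpr (by omega))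
    intro j hj hjm
    have hjm' : m ≤ j := by simpa using hjm
    have hz : (N ^ j) y = 0 := by
      rw [show j = (j - m) + m by omega, pow_add, Module.End.mul_apply, hm, map_zero]
    simp [hz]
  have htend : Tendsto (fun n => (T ^ n) y) atTop (nhds 0) := by
    have h2 : Tendsto (fun n => ∑ j ∈ Finset.range m, n.choose j • μ ^ (n - j) • ((N ^ j) y))
        atTop (nhds 0) := by
      rw [show (0 : V) = ∑ j ∈ Finset.range m, (0 : V) by simp]
      apply tendsto_finset_sum
      intro j hj
      have hn : Tendsto (fun n : ℕ => (n.choose j : ℝ) * ‖μ‖ ^ (n - j) * ‖(N ^ j) y‖)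
          atTop (nhds 0) := by
        simpa using (choose_geom_tendsto j (norm_nonneg μ) hμ).mul_const ‖(N ^ j) y‖
      apply squeeze_zero_norm _ hn
      intro n
      rw [← Nat.cast_smul_eq_nsmul ℂ, norm_smul, norm_smul]
      simp only [Complex.norm_natCast, norm_pow]
      rw [mul_assoc]
    apply h2.congr'
    filter_upwards [eventually_ge_atTop m] with n hn
    exact (key2 n hn).symm
  obtain ⟨B, hB⟩ := htend.norm.bddAbove_range
  exact ⟨B, fun n => hB ⟨n, rfl⟩⟩

end Aux2

set_option maxHeartbeats 1000000 in
/-- approximation lemma: Let `V` be a finite-dimensional complex inner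
product space, `T` a linear operator whose minimal polynomial has a simple root `α` with
`|α| > 1`, all other roots `β` having `|β| < 1` or being simple with `|β| = 1`.  If
`(v_i)_{i ≥ 1}` satisfies `Σ ‖v_{i+1} - T v_i‖ < ∞`, then there are `w` with `T w = α w`
and `C > 0` such that `‖v_i - α^i w‖ ≤ C` for all `i ≥ 1`. -/
theorem stmt12 (V : Type*) [NormedAddCommGroup V] [InnerProductSpace ℂ V]
    [FiniteDimensional ℂ V] (T : V →ₗ[ℂ] V) (α : ℂ) (hα : 1 < ‖α‖)
    (hroot : (minpoly ℂ T).IsRoot α)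
    (hsimple : (minpoly ℂ T).rootMultiplicity α = 1)
    (hother : ∀ β : ℂ, (minpoly ℂ T).IsRoot β → β ≠ α →
      ‖β‖ < 1 ∨ (‖β‖ = 1 ∧ (minpoly ℂ T).rootMultiplicity β = 1))
    (v : ℕ → V) (hsum : Summable fun i : ℕ => ‖v (i + 2) - T (v (i + 1))‖) :
    ∃ (w : V) (C : ℝ), 0 < C ∧ T w = α • w ∧
      ∀ i : ℕ, 1 ≤ i → ‖v i - α ^ i • w‖ ≤ C := by
  classical
  -- the decomposition V = E ⊕ U
  set E := Module.End.maxGenEigenspace T α with hE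
  set U := ⨆ μ : ℂ, ⨆ _ : μ ≠ α, Module.End.maxGenEigenspace T μ with hU
  have hdisj : Disjoint E U := Module.End.independent_maxGenEigenspace T α
  have hsup : E ⊔ U = ⊤ := by
    rw [hE, hU, ← iSup_split_single (fun μ => Module.End.maxGenEigenspace T μ) α]
    exact Module.End.iSup_maxGenEigenspace_eq_top T
  have hcompl : IsCompl E U := ⟨hdisj, codisjoint_iff.mpr hsup⟩
  set P0 := E.projectionOnto U hcompl with hP0
  set Pl : V →ₗ[ℂ] V := E.subtype ∘ₗ P0 with hPl
  have hPlE : ∀ x : V, Pl x ∈ E := fun x => (P0 x).2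
  have hPlid : ∀ x ∈ E, Pl x = x := by
    intro x hx
    have := Submodule.projectionOnto_apply_left hcompl ⟨x, hx⟩
    exact congrArg (Submodule.subtype E) this
  have hPl0 : ∀ x ∈ U, Pl x = 0 := by
    intro x hx
    have h0 : P0 x = 0 := Submodule.projectionOnto_apply_of_mem_right hcompl hx
    simp [hPl, h0]
  have hsub : ∀ x : V, x - Pl x ∈ U := by
    intro x
    have h := Submodule.projection_add_projection_eq_self hcompl x
    have hplx : Pl x = ((E.projectionOnto U hcompl) x : V) := rfl
    have h2 : x - Pl x = ((U.projectionOnto E hcompl.symm) x : V) :=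
      sub_eq_of_eq_add' (by rw [hplx] at *; exact h.symm)
    rw [h2]
    exact ((U.projectionOnto E hcompl.symm) x).2
  -- invariance
  have hTE : ∀ x ∈ E, T x ∈ E :=
    fun x hx => Module.End.mapsTo_maxGenEigenspace_of_comm (Commute.refl T) α hx
  have hTU : ∀ x ∈ U, T x ∈ U := by
    intro x hx
    have hmap : Submodule.map T U ≤ U := by
      rw [hU, Submodule.map_iSup]
      refine iSup_le fun μ => ?_
      rw [Submodule.map_iSup]
      refine iSup_le fun hμ => ?_
      refine le_trans ?_ (le_iSup₂ (f := fun μ _ => Module.End.maxGenEigenspace T μ) μ hμ)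
      rintro z ⟨y, hy, rfl⟩
      exact Module.End.mapsTo_maxGenEigenspace_of_comm (Commute.refl T) μ hy
    exact hmap ⟨x, hx, rfl⟩
  have hTeig : ∀ x ∈ E, T x = α • x := fun x hx => eigen_of_simple_root T hsimple hx
  have hPT : ∀ x : V, Pl (T x) = α • Pl x := by
    intro x
    have hxdec : T x = T (Pl x) + T (x - Pl x) := by rw [← map_add]; congr 1; abel
    rw [hxdec, map_add, hPlid _ (hTE _ (hPlE x)), hPl0 _ (hTU _ (hsub x)), add_zero,
      hTeig _ (hPlE x)]
  have hPpow : ∀ (j : ℕ) (y : V), Pl ((T ^ j) y) = α ^ j • Pl y := by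
    intro j
    induction j with
    | zero => simp
    | succ j ih =>
      intro y
      rw [pow_succ', Module.End.mul_apply, hPT, ih, smul_smul, ← pow_succ']
  -- pointwise power bounds on U
  have hUbdd : ∀ y ∈ U, ∃ B : ℝ, ∀ n : ℕ, ‖(T ^ n) y‖ ≤ B := by
    intro y hy
    have hy' : y ∈ ⨆ μ : {μ : ℂ // μ ≠ α}, Module.End.maxGenEigenspace T μ.1 := by
      rw [iSup_subtype]
      exact hy
    refine Submodule.iSup_induction (motive := fun z => ∃ B : ℝ, ∀ n : ℕ, ‖(T ^ n) z‖ ≤ B)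
      _ hy' ?_ ?_ ?_
    · rintro ⟨μ, hμα⟩ z hz
      by_cases hz0 : z = 0
      · exact ⟨0, by simp [hz0]⟩
      rcases hother μ (isRoot_of_mem_maxGen T hz hz0) hμα with hlt | ⟨habs, hmult⟩
      · exact bdd_pow_small T hlt hz
      · have heig : T z = μ • z := eigen_of_simple_root T hmult hz
        refine ⟨‖z‖, fun n => ?_⟩
        rw [pow_apply_eigen T heig n, norm_smul, norm_pow, habs,
          one_pow, one_mul]
    · exact ⟨0, by simp⟩
    · rintro x z ⟨B1, h1⟩ ⟨B2, h2⟩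
      refine ⟨B1 + B2, fun n => ?_⟩
      rw [map_add]
      exact (norm_add_le _ _).trans (add_le_add (h1 n) (h2 n))
  -- uniform bound via Banach–Steinhaus
  set g : ℕ → V →L[ℂ] V :=
    fun n => LinearMap.toContinuousLinearMap ((T ^ n) ∘ₗ (LinearMap.id - Pl)) with hg
  have hgapp : ∀ (n : ℕ) (x : V), g n x = (T ^ n) (x - Pl x) := by
    intro n x
    simp [hg, LinearMap.sub_apply]
  have hgbdd : ∀ x : V, ∃ C : ℝ, ∀ n : ℕ, ‖g n x‖ ≤ C := by
    intro x
    obtain ⟨B, hB⟩ := hUbdd (x - Pl x) (hsub x)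
    exact ⟨B, fun n => by rw [hgapp]; exact hB n⟩
  obtain ⟨C', hC'⟩ := banach_steinhaus hgbdd
  set M : ℝ := max C' 0 with hM
  have hMn : ∀ (n : ℕ) (x : V), ‖(T ^ n) (x - Pl x)‖ ≤ M * ‖x‖ := by
    intro n x
    rw [← hgapp]
    calc ‖g n x‖ ≤ ‖g n‖ * ‖x‖ := (g n).le_opNorm x
      _ ≤ M * ‖x‖ := by
        have := (hC' n).trans (le_max_left C' 0)
        exact mul_le_mul_of_nonneg_right this (norm_nonneg x)
  have hM0 : 0 ≤ M := le_max_right C' 0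
  -- the error terms
  set d : ℕ → V := fun k => v (k + 2) - T (v (k + 1)) with hd
  have hdsum : Summable fun k => ‖d k‖ := hsum
  set S : ℝ := ∑' k, ‖d k‖ with hS
  have hS0 : 0 ≤ S := tsum_nonneg fun k => norm_nonneg _
  have hα0 : α ≠ 0 := by
    intro h
    rw [h] at hα
    simp at hα
    linarith
  set PC := LinearMap.toContinuousLinearMap Pl with hPC
  set Np : ℝ := ‖PC‖ with hNp
  have hNp0 : 0 ≤ Np := norm_nonneg _
  have hPlb : ∀ x : V, ‖Pl x‖ ≤ Np * ‖x‖ := fun x => PC.le_opNorm x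
  -- the recursion formula
  have hform : ∀ n : ℕ,
      v (n + 1) = (T ^ n) (v 1) + ∑ k ∈ Finset.range n, (T ^ (n - 1 - k)) (d k) := by
    intro n
    induction n with
    | zero => simp
    | succ n ih =>
      have hrec : v (n + 2) = T (v (n + 1)) + d n := by rw [hd]; simp
      rw [hrec, ih, map_add, map_sum, Finset.sum_range_succ]
      have h1 : T ((T ^ n) (v 1)) = (T ^ (n + 1)) (v 1) := by
        rw [pow_succ', Module.End.mul_apply]
      have h2 : ∀ k ∈ Finset.range n, T ((T ^ (n - 1 - k)) (d k)) = (T ^ (n - k)) (d k) := by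
        intro k hk
        rw [Finset.mem_range] at hk
        rw [← Module.End.mul_apply, ← pow_succ']
        congr 2
        omega
      rw [Finset.sum_congr rfl h2, h1]
      have h3 : ∀ k ∈ Finset.range n, (T ^ (n + 1 - 1 - k)) (d k) = (T ^ (n - k)) (d k) := by
        intro k hk
        congr 2
      rw [Finset.sum_congr rfl h3]
      have h4 : (T ^ (n + 1 - 1 - n)) (d n) = d n := by
        rw [show n + 1 - 1 - n = 0 by omega, pow_zero, Module.End.one_apply]
      rw [h4]
      abel
  have hPform : ∀ n : ℕ, Pl (v (n + 1))
      = α ^ n • Pl (v 1) + ∑ k ∈ Finset.range n, α ^ (n - 1 - k) • Pl (d k) := by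
    intro n
    rw [hform n, map_add, map_sum, hPpow]
    congr 1
    exact Finset.sum_congr rfl fun k _ => hPpow _ _
  -- the limit vector
  set c : ℕ → V := fun k => (α ^ (-(k : ℤ) - 2)) • Pl (d k) with hc
  have habs1 : (1:ℝ) ≤ ‖α‖ := le_of_lt hα
  have hzle : ∀ z : ℤ, z ≤ 0 → ‖α ^ z‖ ≤ 1 := by
    intro z hz
    rw [norm_zpow]
    exact zpow_le_one_of_nonpos₀ habs1 hz
  have hcnorm : ∀ k, ‖c k‖ ≤ Np * ‖d k‖ := by
    intro k
    calc ‖c k‖ = ‖α ^ (-(k:ℤ)-2)‖ * ‖Pl (d k)‖ := by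
          rw [hc]; rw [norm_smul]
      _ ≤ 1 * (Np * ‖d k‖) :=
          mul_le_mul (hzle _ (by omega)) (hPlb _) (norm_nonneg _) one_pos.le
      _ = Np * ‖d k‖ := one_mul _
  have hcsum : Summable c :=
    Summable.of_norm (Summable.of_nonneg_of_le (fun k => norm_nonneg _) hcnorm
      (hdsum.mul_left Np))
  set w : V := (α ^ (-1 : ℤ)) • Pl (v 1) + ∑' k, c k with hw
  have hTPl : ∀ y : V, T (Pl y) = α • Pl y := fun y => hTeig _ (hPlE y)
  have hTw : T w = α • w := by
    have hTc : ∀ k, T (c k) = α • c k := by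
      intro k
      rw [hc]
      simp only
      rw [map_smul, hTPl, smul_comm]
    have hTtsum : T (∑' k, c k) = ∑' k, T (c k) := by
      have h := (LinearMap.toContinuousLinearMap T).map_tsum hcsum
      simpa using h
    rw [hw, map_add, map_smul, hTPl, hTtsum, tsum_congr hTc, Summable.tsum_const_smul _ hcsum,
      smul_add, smul_comm]
  -- the scaled vector α^(n+1) • w
  set f : ℕ → ℕ → V := fun n k => (α ^ ((n:ℤ) - 1 - k)) • Pl (d k) with hf
  have hsmz : ∀ (z z' : ℤ) (x : V), (α ^ z) • (α ^ z') • x = (α ^ (z + z')) • x := by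
    intro z z' x
    rw [smul_smul, ← zpow_add₀ hα0]
  have hfe : ∀ (n k : ℕ), f n k = (α ^ ((n:ℤ) + 1)) • c k := by
    intro n k
    rw [hf, hc]
    simp only
    rw [hsmz]
    congr 2
    ring
  have hfsummable : ∀ n : ℕ, Summable (f n) := by
    intro n
    exact Summable.congr (hcsum.const_smul (α ^ ((n:ℤ)+1))) (fun k => (hfe n k).symm)
  have hwn : ∀ n : ℕ, (α ^ (n + 1) : ℂ) • w = α ^ n • Pl (v 1) + ∑' k, f n k := by
    intro n
    rw [hw, smul_add]
    congr 1
    · rw [← zpow_natCast α (n+1), hsmz]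
      rw [show ((n+1 : ℕ) : ℤ) + -1 = (n : ℤ) by push_cast; ring, zpow_natCast]
    · rw [← zpow_natCast α (n+1), ← Summable.tsum_const_smul _ hcsum]
      apply tsum_congr
      intro k
      rw [show ((n+1 : ℕ) : ℤ) = (n:ℤ) + 1 by push_cast; ring, hfe]
  -- the tail estimate for the E-component
  have htail : ∀ n : ℕ, ‖Pl (v (n + 1)) - α ^ (n + 1) • w‖ ≤ Np * S := by
    intro n
    have hsplit : ∑' k, f n k = ∑ k ∈ Finset.range n, f n k + ∑' k, f n (k + n) :=
      (Summable.sum_add_tsum_nat_add n (hfsummable n)).symm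
    have hfin : Pl (v (n + 1)) = α ^ n • Pl (v 1) + ∑ k ∈ Finset.range n, f n k := by
      rw [hPform n]
      congr 1
      apply Finset.sum_congr rfl
      intro k hk
      rw [Finset.mem_range] at hk
      rw [hf]
      simp only
      rw [← zpow_natCast α (n - 1 - k)]
      congr 2
      omega
    have hdiff : Pl (v (n + 1)) - α ^ (n + 1) • w = -(∑' k, f n (k + n)) := by
      rw [hfin, hwn n, hsplit]
      abel
    rw [hdiff, norm_neg]
    have hbound : ∀ k : ℕ, ‖f n (k + n)‖ ≤ Np * ‖d (k + n)‖ := by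
      intro k
      rw [hf]
      simp only
      rw [norm_smul]
      calc ‖α ^ ((n:ℤ) - 1 - (k + n))‖ * ‖Pl (d (k + n))‖
          ≤ 1 * (Np * ‖d (k + n)‖) :=
            mul_le_mul (hzle _ (by push_cast; omega)) (hPlb _) (norm_nonneg _) one_pos.le
        _ = Np * ‖d (k + n)‖ := one_mul _
    have hsum2 : Summable fun k => ‖d (k + n)‖ := (summable_nat_add_iff n).mpr hdsum
    have hsum3 : Summable fun k => ‖f n (k + n)‖ :=
      Summable.of_nonneg_of_le (fun k => norm_nonneg _) hbound (hsum2.mul_left Np)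
    calc ‖∑' k, f n (k + n)‖ ≤ ∑' k, ‖f n (k + n)‖ := norm_tsum_le_tsum_norm hsum3
      _ ≤ ∑' k, Np * ‖d (k + n)‖ := Summable.tsum_le_tsum hbound hsum3 (hsum2.mul_left Np)
      _ = Np * ∑' k, ‖d (k + n)‖ := tsum_mul_left
      _ ≤ Np * S := by
        apply mul_le_mul_of_nonneg_left _ hNp0
        have h5 := (Summable.sum_add_tsum_nat_add n hdsum : ∑ k ∈ Finset.range n, ‖d k‖ + ∑' k, ‖d (k + n)‖ = S)
        have hpart : 0 ≤ ∑ k ∈ Finset.range n, ‖d k‖ :=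
          Finset.sum_nonneg fun _ _ => norm_nonneg _
        linarith
  -- the U-component estimate
  have hpartial : ∀ n : ℕ, ∑ k ∈ Finset.range n, ‖d k‖ ≤ S :=
    fun n => Summable.sum_le_tsum _ (fun k _ => norm_nonneg _) hdsum
  have hQ : ∀ n : ℕ, ‖v (n + 1) - Pl (v (n + 1))‖ ≤ M * ‖v 1‖ + M * S := by
    intro n
    have hcom : ∀ (j : ℕ) (y : V), (T ^ j) y - Pl ((T ^ j) y) = (T ^ j) (y - Pl y) := by
      intro j y
      rw [map_sub]
      congr 1
      rw [hPpow j y, ← pow_apply_eigen T (hTPl y) j]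
    have hdec : v (n + 1) - Pl (v (n + 1))
        = (T ^ n) (v 1 - Pl (v 1)) + ∑ k ∈ Finset.range n, (T ^ (n - 1 - k)) (d k - Pl (d k)) := by
      rw [hform n, map_add, map_sum]
      rw [show ∀ a b a' b' : V, a + b - (a' + b') = (a - a') + (b - b') from fun a b a' b' => by abel]
      rw [hcom n (v 1), ← Finset.sum_sub_distrib]
      congr 1
      exact Finset.sum_congr rfl fun k _ => hcom _ _
    rw [hdec]
    calc ‖(T ^ n) (v 1 - Pl (v 1)) + ∑ k ∈ Finset.range n, (T ^ (n - 1 - k)) (d k - Pl (d k))‖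
        ≤ ‖(T ^ n) (v 1 - Pl (v 1))‖ + ‖∑ k ∈ Finset.range n, (T ^ (n - 1 - k)) (d k - Pl (d k))‖ :=
          norm_add_le _ _
      _ ≤ M * ‖v 1‖ + ∑ k ∈ Finset.range n, M * ‖d k‖ := by
          gcongr
          · exact hMn n (v 1)
          · exact (norm_sum_le _ _).trans (Finset.sum_le_sum fun k _ => hMn _ _)
      _ = M * ‖v 1‖ + M * ∑ k ∈ Finset.range n, ‖d k‖ := by rw [Finset.mul_sum]
      _ ≤ M * ‖v 1‖ + M * S := by
          have := mul_le_mul_of_nonneg_left (hpartial n) hM0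
          linarith
  -- conclusion
  refine ⟨w, M * ‖v 1‖ + M * S + Np * S + 1, by positivity, hTw, ?_⟩
  intro i hi
  obtain ⟨n, rfl⟩ : ∃ n : ℕ, i = n + 1 := ⟨i - 1, by omega⟩
  calc ‖v (n + 1) - α ^ (n + 1) • w‖
      = ‖(v (n + 1) - Pl (v (n + 1))) + (Pl (v (n + 1)) - α ^ (n + 1) • w)‖ := by
        congr 1
        abel
    _ ≤ ‖v (n + 1) - Pl (v (n + 1))‖ + ‖Pl (v (n + 1)) - α ^ (n + 1) • w‖ := norm_add_le _ _
    _ ≤ (M * ‖v 1‖ + M * S) + Np * S := add_le_add (hQ n) (htail n)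
    _ ≤ M * ‖v 1‖ + M * S + Np * S + 1 := by linarith
end

section
/- Let q be a quadratic form on ℚ^{n+1} of Witt index at least 1 and rank at least 3. Then for any finite set of proper subspaces of ℚ^{n+1}, there is a zero of q in ℚ^{n+1} which lies outside of their union. -/
open QuadraticMap

lemma aux_qadd {V : Type*} [AddCommGroup V] [Module ℚ V] (q : QuadraticForm ℚ V) (u v : V) :
    q (u + v) = q u + q v + polar q u v := by
  simp [QuadraticMap.polar]

lemma aux_qval {V : Type*} [AddCommGroup V] [Module ℚ V] (q : QuadraticForm ℚ V)
    (x y w : V) (hx : q x = 0) (hy : q y = 0) (hxw : polar q x w = 0)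
    (hyw : polar q y w = 0) (a t : ℚ) :
    q (a • x + y + t • w) = t^2 * q w + a * polar q x y := by
  rw [aux_qadd q (a • x + y) (t • w), aux_qadd q (a • x) y, polar_add_left,
    polar_smul_left, polar_smul_left, polar_smul_right, polar_smul_right, QuadraticMap.map_smul,
    QuadraticMap.map_smul, hx, hy, hxw, hyw]
  simp [smul_eq_mul]; ring

lemma aux_pigeon {ι : Type*} [Finite ι] {T : Set ℚ} (hT : T.Infinite) (S : ι → Set ℚ)
    (h : ∀ t ∈ T, ∃ j, t ∈ S j) : ∃ j, (T ∩ S j).Infinite := by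
  by_contra hc
  push_neg at hc
  have hc : ∀ j, (T ∩ S j).Finite := fun j => by simpa using hc j
  have hsub : T ⊆ ⋃ j, (T ∩ S j) := fun t ht => by
    obtain ⟨j, hj⟩ := h t ht; exact Set.mem_iUnion.2 ⟨j, ht, hj⟩
  exact hT ((Set.finite_iUnion hc).subset hsub)

lemma aux_three {S : Set ℚ} (hS : S.Infinite) :
    ∃ t₁ t₂ t₃, t₁ ∈ S ∧ t₂ ∈ S ∧ t₃ ∈ S ∧ t₁ ≠ t₂ ∧ t₁ ≠ t₃ ∧ t₂ ≠ t₃ := by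
  obtain ⟨t₁, h₁⟩ := hS.nonempty
  obtain ⟨t₂, h₂⟩ := (hS.diff (Set.finite_singleton t₁)).nonempty
  obtain ⟨t₃, h₃⟩ := (hS.diff ((Set.finite_singleton t₂).insert t₁)).nonempty
  refine ⟨t₁, t₂, t₃, h₁, h₂.1, h₃.1, ?_, ?_, ?_⟩ <;>
    simp only [Set.mem_diff, Set.mem_insert_iff, Set.mem_singleton_iff, not_or] at h₂ h₃ <;>
    tauto

lemma aux_two {S : Set ℚ} (hS : S.Infinite) : ∃ t₁ t₂, t₁ ∈ S ∧ t₂ ∈ S ∧ t₁ ≠ t₂ := by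
  obtain ⟨t₁, t₂, t₃, h₁, h₂, _, h₁₂, _, _⟩ := aux_three hS
  exact ⟨t₁, t₂, h₁, h₂, h₁₂⟩

lemma claimA {n s : ℕ} (q : QuadraticForm ℚ (Fin (n + 1) → ℚ))
    (W : Fin s → Submodule ℚ (Fin (n + 1) → ℚ))
    (hcon : ∀ v, q v = 0 → ∃ j, v ∈ W j)
    (x y w : Fin (n + 1) → ℚ) (hx : q x = 0) (hy : q y = 0)
    (hB : polar q x y ≠ 0) (hxw : polar q x w = 0) (hyw : polar q y w = 0)
    (hw : q w ≠ 0) : ∃ j, x ∈ W j ∧ y ∈ W j ∧ w ∈ W j := by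
  set B := polar q x y with hBdef
  set f : ℚ → (Fin (n + 1) → ℚ) := fun t => (-(t ^ 2 * q w) / B) • x + y + t • w with hf
  have hf0 : ∀ t, q (f t) = 0 := by
    intro t
    rw [hf]
    simp only
    rw [aux_qval q x y w hx hy hxw hyw]
    field_simp
    rw [← hBdef]; ring
  obtain ⟨j, hj⟩ := aux_pigeon (Set.infinite_univ : (Set.univ : Set ℚ).Infinite)
    (fun j => {t | f t ∈ W j}) (fun t _ => hcon _ (hf0 t))
  obtain ⟨t₁, t₂, t₃, h1, h2, h3, h12, h13, h23⟩ := aux_three hj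
  have m1 : f t₁ ∈ W j := h1.2
  have m2 : f t₂ ∈ W j := h2.2
  have m3 : f t₃ ∈ W j := h3.2
  have e12 : t₁ - t₂ ≠ 0 := sub_ne_zero.mpr h12
  have e13 : t₁ - t₃ ≠ 0 := sub_ne_zero.mpr h13
  have e21 : t₂ - t₁ ≠ 0 := sub_ne_zero.mpr (Ne.symm h12)
  have e23 : t₂ - t₃ ≠ 0 := sub_ne_zero.mpr h23
  have e31 : t₃ - t₁ ≠ 0 := sub_ne_zero.mpr (Ne.symm h13)
  have e32 : t₃ - t₂ ≠ 0 := sub_ne_zero.mpr (Ne.symm h23)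
  have hxm : x ∈ W j := by
    have hc := (W j).add_mem ((W j).add_mem
      ((W j).smul_mem (-(B / (q w * ((t₁ - t₂) * (t₁ - t₃))))) m1)
      ((W j).smul_mem (-(B / (q w * ((t₂ - t₁) * (t₂ - t₃))))) m2))
      ((W j).smul_mem (-(B / (q w * ((t₃ - t₁) * (t₃ - t₂))))) m3)
    have heq : (-(B / (q w * ((t₁ - t₂) * (t₁ - t₃))))) • f t₁ +
        (-(B / (q w * ((t₂ - t₁) * (t₂ - t₃))))) • f t₂ +
        (-(B / (q w * ((t₃ - t₁) * (t₃ - t₂))))) • f t₃ = x := by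
      funext i
      simp only [hf, Pi.add_apply, Pi.smul_apply, smul_eq_mul]
      field_simp
      ring
    rwa [heq] at hc
  have hwm : w ∈ W j := by
    have hc := (W j).add_mem ((W j).smul_mem (t₁ - t₂)⁻¹ ((W j).sub_mem m1 m2))
      ((W j).smul_mem ((t₁ + t₂) * q w / B) hxm)
    have heq : (t₁ - t₂)⁻¹ • (f t₁ - f t₂) + ((t₁ + t₂) * q w / B) • x = w := by
      funext i
      simp only [hf, Pi.add_apply, Pi.sub_apply, Pi.smul_apply, smul_eq_mul]
      field_simp
      ring
    rwa [heq] at hc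
  have hym : y ∈ W j := by
    have hc := (W j).sub_mem ((W j).add_mem m1 ((W j).smul_mem (t₁ ^ 2 * q w / B) hxm))
      ((W j).smul_mem t₁ hwm)
    have heq : (f t₁ + (t₁ ^ 2 * q w / B) • x) - t₁ • w = y := by
      funext i
      simp only [hf, Pi.add_apply, Pi.sub_apply, Pi.smul_apply, smul_eq_mul]
      field_simp
      ring
    rwa [heq] at hc
  exact ⟨j, hxm, hym, hwm⟩

lemma claimB {n s : ℕ} (q : QuadraticForm ℚ (Fin (n + 1) → ℚ))
    (W : Fin s → Submodule ℚ (Fin (n + 1) → ℚ))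
    (hcon : ∀ v, q v = 0 → ∃ j, v ∈ W j)
    (x y z w : Fin (n + 1) → ℚ) (hx : q x = 0) (hy : q y = 0)
    (hB : polar q x y ≠ 0) (hxz : polar q x z = 0) (hyz : polar q y z = 0)
    (hz : q z ≠ 0) (hxw : polar q x w = 0) (hyw : polar q y w = 0) :
    ∃ j, x ∈ W j ∧ y ∈ W j ∧ w ∈ W j := by
  by_cases hw : q w = 0
  · -- degenerate case: perturb along z
    have hq : ∀ t : ℚ, q (w + t • z) = t * (polar q w z + t * q z) := by
      intro t
      rw [aux_qadd q w (t • z), QuadraticMap.map_smul, polar_smul_right, hw]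
      simp [smul_eq_mul]; ring
    have hT : {t : ℚ | q (w + t • z) ≠ 0}.Infinite := by
      have hfin : {t : ℚ | q (w + t • z) = 0}.Finite := by
        apply Set.Finite.subset ((Set.finite_singleton (-(polar q w z) / q z)).insert 0)
        intro t ht
        simp only [Set.mem_setOf_eq, hq t] at ht
        rcases mul_eq_zero.mp ht with h | h
        · exact Set.mem_insert_iff.2 (Or.inl h)
        · refine Set.mem_insert_iff.2 (Or.inr ?_)
          simp only [Set.mem_singleton_iff]
          rw [eq_div_iff hz]
          linarith
      have hcompl : {t : ℚ | q (w + t • z) ≠ 0} = {t : ℚ | q (w + t • z) = 0}ᶜ := rfl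
      rw [hcompl]
      exact hfin.infinite_compl
    obtain ⟨j, hj⟩ := aux_pigeon hT
      (fun j => {t : ℚ | x ∈ W j ∧ y ∈ W j ∧ w + t • z ∈ W j}) (fun t ht => by
        have hxw' : polar q x (w + t • z) = 0 := by
          rw [polar_add_right, polar_smul_right, hxw, hxz]; simp
        have hyw' : polar q y (w + t • z) = 0 := by
          rw [polar_add_right, polar_smul_right, hyw, hyz]; simp
        obtain ⟨j, hxj, hyj, hwj⟩ := claimA q W hcon x y (w + t • z) hx hy hB hxw' hyw' ht
        exact ⟨j, hxj, hyj, hwj⟩)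
    obtain ⟨t₁, t₂, h1, h2, h12⟩ := aux_two hj
    have e12 : t₁ - t₂ ≠ 0 := sub_ne_zero.mpr h12
    have hzm : z ∈ W j := by
      have hc := (W j).smul_mem (t₁ - t₂)⁻¹ ((W j).sub_mem h1.2.2.2 h2.2.2.2)
      have heq : (t₁ - t₂)⁻¹ • ((w + t₁ • z) - (w + t₂ • z)) = z := by
        funext i
        simp only [Pi.add_apply, Pi.sub_apply, Pi.smul_apply, smul_eq_mul]
        field_simp
        ring
      rwa [heq] at hc
    have hwm : w ∈ W j := by
      have hc := (W j).sub_mem h1.2.2.2 ((W j).smul_mem t₁ hzm)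
      simpa using hc
    exact ⟨j, h1.2.1, h1.2.2.1, hwm⟩
  · exact claimA q W hcon x y w hx hy hB hxw hyw hw

/-- Let `q` be a quadratic form on `ℚ^{n+1}` of Witt index at least `1`
(i.e. there is a hyperbolic plane: isotropic vectors `x, y` with `polar q x y ≠ 0`)
and of rank at least `3` (i.e. the kernel of the associated bilinear form has dimension
at most `n + 1 - 3`).  Then, for any finite set of proper subspaces of `ℚ^{n+1}`,
there is a zero of `q` outside their union. -/
theorem stmt15 (n : ℕ) (q : QuadraticForm ℚ (Fin (n + 1) → ℚ))
    (hwitt : ∃ x y : Fin (n + 1) → ℚ, q x = 0 ∧ q y = 0 ∧ QuadraticMap.polar q x y ≠ 0)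
    (hrank : Module.finrank ℚ
        (LinearMap.ker (QuadraticMap.polarBilin q)) + 3 ≤ n + 1)
    (s : ℕ) (W : Fin s → Submodule ℚ (Fin (n + 1) → ℚ)) (hW : ∀ j, W j ≠ ⊤) :
    ∃ v : Fin (n + 1) → ℚ, q v = 0 ∧ ∀ j, v ∉ W j := by
  by_contra hcon
  push_neg at hcon
  replace hcon : ∀ v, q v = 0 → ∃ j, v ∈ W j := fun v hv => hcon v hv
  obtain ⟨x, y, hx, hy, hB⟩ := hwitt
  set B := polar q x y with hBdef
  have hxx : polar q x x = 0 := by rw [polar_self, hx]; simp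
  have hyy : polar q y y = 0 := by rw [polar_self, hy]; simp
  have hyx : polar q y x = B := polar_comm q y x
  -- decomposition facts
  have hdec : ∀ v : Fin (n + 1) → ℚ,
      polar q x (v - (polar q y v / B) • x - (polar q x v / B) • y) = 0 ∧
      polar q y (v - (polar q y v / B) • x - (polar q x v / B) • y) = 0 := by
    intro v
    constructor
    · rw [polar_sub_right, polar_sub_right, polar_smul_right, polar_smul_right, hxx,
        ← hBdef]
      rw [polar_comm q x v]
      simp only [smul_eq_mul]; field_simp; ring
    · rw [polar_sub_right, polar_sub_right, polar_smul_right, polar_smul_right, hyy, hyx,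
        polar_comm q y v]
      simp only [smul_eq_mul]; field_simp; ring
  -- find an anisotropic vector orthogonal to x and y
  have hzex : ∃ z, polar q x z = 0 ∧ polar q y z = 0 ∧ q z ≠ 0 := by
    by_contra hz0
    push_neg at hz0
    set Up : Submodule ℚ (Fin (n + 1) → ℚ) :=
      LinearMap.ker (QuadraticMap.polarBilin q x) ⊓ LinearMap.ker (QuadraticMap.polarBilin q y)
      with hUp
    have hmemUp : ∀ z, z ∈ Up ↔ polar q x z = 0 ∧ polar q y z = 0 := by
      intro z
      simp [hUp, LinearMap.mem_ker, QuadraticMap.polarBilin_apply_apply]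
    have hUk : Up ≤ LinearMap.ker (QuadraticMap.polarBilin q) := by
      intro z hzUp
      obtain ⟨hxz, hyz⟩ := (hmemUp z).mp hzUp
      rw [LinearMap.mem_ker]
      apply LinearMap.ext
      intro v
      rw [LinearMap.zero_apply, QuadraticMap.polarBilin_apply_apply]
      set wv := v - (polar q y v / B) • x - (polar q x v / B) • y with hwv
      have hdv := hdec v
      have hqz : q z = 0 := hz0 z hxz hyz
      have hqwv : q wv = 0 := hz0 wv hdv.1 hdv.2
      have hqzw : q (z + wv) = 0 := by
        apply hz0
        · rw [polar_add_right, hxz, hdv.1]; ring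
        · rw [polar_add_right, hyz, hdv.2]; ring
      have hpzw : polar q z wv = 0 := by
        have := aux_qadd q z wv
        rw [hqz, hqwv, hqzw] at this
        linarith
      have hv : v = wv + ((polar q y v / B) • x + (polar q x v / B) • y) := by
        rw [hwv]; module
      rw [hv, polar_add_right, polar_add_right, polar_smul_right, polar_smul_right,
        polar_comm q z x, polar_comm q z y, hxz, hyz, hpzw]
      simp
    have htop : Up ⊔ Submodule.span ℚ {x, y} = ⊤ := by
      rw [eq_top_iff]
      rintro v -
      set wv := v - (polar q y v / B) • x - (polar q x v / B) • y with hwv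
      have hdv := hdec v
      have hwvUp : wv ∈ Up := (hmemUp wv).mpr ⟨hdv.1, hdv.2⟩
      have hv : v = wv + ((polar q y v / B) • x + (polar q x v / B) • y) := by
        rw [hwv]; module
      rw [hv]
      refine Submodule.add_mem _ (Submodule.mem_sup_left hwvUp) (Submodule.mem_sup_right ?_)
      exact Submodule.add_mem _
        (Submodule.smul_mem _ _ (Submodule.subset_span (by simp)))
        (Submodule.smul_mem _ _ (Submodule.subset_span (by simp)))
    have hx0 : x ≠ 0 := by
      intro h
      apply hB
      rw [hBdef]
      subst h
      simp [QuadraticMap.polar]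
    have hy0 : y ≠ 0 := by
      intro h
      apply hB
      rw [hBdef]
      subst h
      simp [QuadraticMap.polar]
    have hspan2 : Module.finrank ℚ (Submodule.span ℚ ({x, y} : Set (Fin (n + 1) → ℚ))) ≤ 2 := by
      rw [show ({x, y} : Set (Fin (n + 1) → ℚ)) = insert x {y} from rfl, Submodule.span_insert]
      calc Module.finrank ℚ ((ℚ ∙ x) ⊔ Submodule.span ℚ {y} : Submodule ℚ (Fin (n + 1) → ℚ))
          ≤ Module.finrank ℚ (ℚ ∙ x) + Module.finrank ℚ (Submodule.span ℚ ({y} : Set (Fin (n + 1) → ℚ))) :=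
            Submodule.finrank_add_le_finrank_add_finrank _ _
        _ ≤ 2 := by
            rw [finrank_span_singleton hx0, finrank_span_singleton hy0]
    have h1 : (n + 1 : ℕ) ≤ Module.finrank ℚ Up + 2 := by
      have h2 := Submodule.finrank_add_le_finrank_add_finrank Up (Submodule.span ℚ {x, y})
      rw [htop] at h2
      rw [finrank_top, Module.finrank_fin_fun] at h2
      omega
    have h3 : Module.finrank ℚ Up ≤
        Module.finrank ℚ (LinearMap.ker (QuadraticMap.polarBilin q)) :=
      Submodule.finrank_mono hUk
    omega
  obtain ⟨z, hxz, hyz, hz⟩ := hzex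
  have hcov : ∀ v : Fin (n + 1) → ℚ, ∃ j, v ∈ W j := by
    intro v
    set wv := v - (polar q y v / B) • x - (polar q x v / B) • y with hwv
    have hdv := hdec v
    obtain ⟨j, hxj, hyj, hwj⟩ := claimB q W hcon x y z wv hx hy hB hxz hyz hz hdv.1 hdv.2
    refine ⟨j, ?_⟩
    have hv : v = wv + ((polar q y v / B) • x + (polar q x v / B) • y) := by
      rw [hwv]; module
    rw [hv]
    exact (W j).add_mem hwj ((W j).add_mem ((W j).smul_mem _ hxj) ((W j).smul_mem _ hyj))
  have huniv : ⋃ j, (W j : Set (Fin (n + 1) → ℚ)) = Set.univ :=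
    Set.eq_univ_of_forall fun v => Set.mem_iUnion.2 (hcov v)
  obtain ⟨j, hj⟩ := Subspace.exists_eq_top_of_iUnion_eq_univ huniv
  exact hW j hj
end

section
/- Let ξ ∈ ℝ^{n+1} with ‖ξ‖ = 1 and write, for x ∈ ℝ^{n+1}, Δx := x − (x·ξ)ξ, so that ‖Δx‖ = ‖x ∧ ξ‖. Then for any x₁,…,x_k ∈ ℝ^{n+1} (1 ≤ k ≤ n+1), the wedge product satisfies ‖x₁ ∧ ⋯ ∧ x_k‖ ≤ C·Σ_{i=1}^k ‖x_i‖ · Π_{j≠i} ‖x_j ∧ ξ‖ for a constant C depending only on n and k. -/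
open Finset Equiv Matrix

local notation "ε" σ => ((Equiv.Perm.sign σ : ℤ) : ℝ)

variable {m N : Type*} [Fintype m] [DecidableEq m] [Fintype N] [DecidableEq N]

theorem cb_step1 (A : Matrix m N ℝ) :
    det (A * Aᵀ) = ∑ f : m → N, det (A.submatrix id f) * ∏ i, A i (f i) := by
  calc det (A * Aᵀ)
      = ∑ σ : Perm m, (ε σ) * ∏ i, (∑ t, A (σ i) t * A i t) := by
        simp only [det_apply', Matrix.mul_apply, transpose_apply]
    _ = ∑ σ : Perm m, ∑ f : m → N, (ε σ) * ∏ i, (A (σ i) (f i) * A i (f i)) := by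
        simp only [prod_univ_sum, Fintype.piFinset_univ, mul_sum]
    _ = ∑ f : m → N, ∑ σ : Perm m, ((ε σ) * ∏ i, A (σ i) (f i)) * ∏ i, A i (f i) := by
        rw [Finset.sum_comm]
        simp only [prod_mul_distrib, mul_assoc]
    _ = ∑ f : m → N, det (A.submatrix id f) * ∏ i, A i (f i) := by
        refine Finset.sum_congr rfl fun f _ => ?_
        rw [← Finset.sum_mul, det_apply']
        rfl

theorem cb_perm (A : Matrix m N ℝ) (f : m → N) (τ : Equiv.Perm m) :
    det (A.submatrix id (f ∘ τ)) = (ε τ) * det (A.submatrix id f) := by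
  have : A.submatrix id (f ∘ τ) = (A.submatrix id f).submatrix id τ := rfl
  rw [this, Matrix.det_permute']

theorem cb (A : Matrix m N ℝ) :
    (Nat.factorial (Fintype.card m) : ℝ) * det (A * Aᵀ) =
      ∑ f : m → N, det (A.submatrix id f) ^ 2 := by
  have h1 : (Nat.factorial (Fintype.card m) : ℝ) * det (A * Aᵀ) =
      ∑ τ : Equiv.Perm m, ∑ f : m → N,
        ((ε τ) * det (A.submatrix id f)) * ∏ i, A i (f (τ i)) := by
    have hcard : (Nat.factorial (Fintype.card m) : ℝ) * det (A * Aᵀ) =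
        ∑ _τ : Equiv.Perm m, det (A * Aᵀ) := by
      simp [Finset.sum_const, Finset.card_univ, Fintype.card_perm, nsmul_eq_mul]
    rw [hcard]
    refine Finset.sum_congr rfl fun τ _ => ?_
    rw [cb_step1]
    have hbij : Function.Bijective (fun f : m → N => f ∘ τ) := by
      constructor
      · intro f g h
        funext i
        have := congrFun h (τ.symm i)
        simpa using this
      · intro g
        exact ⟨g ∘ τ.symm, funext fun i => by simp⟩
    refine (Fintype.sum_bijective _ hbij _ _ fun f => ?_).symm
    rw [cb_perm]
    rfl
  rw [h1, Finset.sum_comm]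
  refine Finset.sum_congr rfl fun f _ => ?_
  have h2 : ∑ τ : Equiv.Perm m, ((ε τ) * det (A.submatrix id f)) * ∏ i, A i (f (τ i))
      = det (A.submatrix id f) * ∑ τ : Equiv.Perm m, (ε τ) * ∏ i, A i (f (τ i)) := by
    rw [Finset.mul_sum]; refine Finset.sum_congr rfl fun τ _ => by ring
  rw [h2]
  have h3 : ∑ τ : Equiv.Perm m, (ε τ) * ∏ i, A i (f (τ i)) = det (A.submatrix id f) := by
    rw [← Matrix.det_transpose, det_apply']
    rfl
  rw [h3, sq]

open Finset

theorem coord_le_norm {ι : Type*} [Fintype ι] (v : EuclideanSpace ℝ ι) (t : ι) :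
    |v t| ≤ ‖v‖ := by
  rw [EuclideanSpace.norm_eq, ← Real.sqrt_sq_eq_abs (v t)]
  apply Real.sqrt_le_sqrt
  refine Finset.single_le_sum (f := fun i => ‖v i‖ ^ 2) (fun i _ => by positivity)
    (Finset.mem_univ t) |>.trans_eq' ?_
  rw [Real.norm_eq_abs, sq_abs]

theorem alt_expand {k : ℕ} {E : Type*} [AddCommGroup E] [Module ℝ E]
    (A : E [⋀^Fin k]→ₗ[ℝ] ℝ) (Δ : Fin k → E) (a : Fin k → ℝ) (ξ : E) :
    A (fun i => Δ i + a i • ξ) = A Δ + ∑ i, a i * A (Function.update Δ i ξ) := by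
  have hexp : A (fun i => Δ i + a i • ξ)
      = ∑ s : Finset (Fin k), A (s.piecewise (fun i => a i • ξ) Δ) := by
    have h := A.toMultilinearMap.map_add_univ (fun i => a i • ξ) Δ
    have h2 : ((fun i => a i • ξ) + Δ) = fun i => Δ i + a i • ξ := by
      funext i; simp [add_comm]
    rw [h2] at h
    exact h
  have hT : ∀ s : Finset (Fin k), 1 < s.card →
      A (s.piecewise (fun i => a i • ξ) Δ) = 0 := by
    intro s hs
    obtain ⟨i, hi, j, hj, hij⟩ := Finset.one_lt_card.mp hs
    have hfun : s.piecewise (fun i => a i • ξ) Δ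
        = fun i => (if i ∈ s then a i else 1) • (s.piecewise (fun _ => ξ) Δ) i := by
      funext t
      by_cases ht : t ∈ s <;> simp [Finset.piecewise, ht]
    rw [hfun]
    have hz : A (s.piecewise (fun _ => ξ) Δ) = 0 := by
      refine A.map_eq_zero_of_eq _ (i := i) (j := j) ?_ hij
      simp [Finset.piecewise, hi, hj]
    have hms : (A fun t => (if t ∈ s then a t else 1) • s.piecewise (fun _ => ξ) Δ t)
        = (∏ t, if t ∈ s then a t else 1) • A (s.piecewise (fun _ => ξ) Δ) :=
      A.toMultilinearMap.map_smul_univ _ _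
    rw [hms, hz, smul_zero]
  classical
  have hres : ∑ s : Finset (Fin k), A (s.piecewise (fun i => a i • ξ) Δ)
      = ∑ s ∈ insert (∅ : Finset (Fin k)) (Finset.univ.image fun i => ({i} : Finset (Fin k))),
          A (s.piecewise (fun i => a i • ξ) Δ) := by
    refine (Finset.sum_subset (Finset.subset_univ _) fun s _ hs => ?_).symm
    refine hT s ?_
    rcases Nat.lt_or_ge 1 s.card with h | h
    · exact h
    · exfalso
      interval_cases hc : s.card
      · exact hs (by simp [Finset.card_eq_zero.mp hc])
      · obtain ⟨i, rfl⟩ := Finset.card_eq_one.mp hc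
        exact hs (by simp)
  rw [hexp, hres, Finset.sum_insert (by simp),
    Finset.sum_image (fun i _ j _ h => Finset.singleton_injective h),
    Finset.piecewise_empty]
  congr 1
  refine Finset.sum_congr rfl fun i _ => ?_
  rw [Finset.piecewise_singleton, AlternatingMap.map_update_smul]
  simp [smul_eq_mul]

open Finset Equiv Matrix

theorem det_row_bound {k : ℕ} (M : Matrix (Fin k) (Fin k) ℝ) (c : Fin k → ℝ)
    (hc : ∀ i, 0 ≤ c i) (h : ∀ i j, |M i j| ≤ c i) :
    |M.det| ≤ (k.factorial : ℝ) * ∏ i, c i := by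
  rw [Matrix.det_apply']
  refine (Finset.abs_sum_le_sum_abs _ _).trans ?_
  have key : ∀ σ : Perm (Fin k), |((Perm.sign σ : ℤ) : ℝ) * ∏ i, M (σ i) i| ≤ ∏ i, c i := by
    intro σ
    rw [abs_mul]
    have h1 : |((Perm.sign σ : ℤ) : ℝ)| = 1 := by
      rcases Int.units_eq_one_or (Perm.sign σ) with hs | hs <;> simp [hs]
    rw [h1, one_mul, Finset.abs_prod]
    calc ∏ i, |M (σ i) i| ≤ ∏ i, c (σ i) :=
          Finset.prod_le_prod (fun i _ => abs_nonneg _) (fun i _ => h _ _)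
      _ = ∏ i, c i := Equiv.prod_comp σ c
  calc ∑ σ : Perm (Fin k), |((Perm.sign σ : ℤ) : ℝ) * ∏ i, M (σ i) i|
      ≤ ∑ _σ : Perm (Fin k), ∏ i, c i := Finset.sum_le_sum fun σ _ => key σ
    _ = (k.factorial : ℝ) * ∏ i, c i := by
        simp [Finset.sum_const, Finset.card_univ, Fintype.card_perm, nsmul_eq_mul]

open RealInnerProductSpace Finset Matrix

section Main

variable {n k : ℕ}

noncomputable def Dmap (n k : ℕ) (f : Fin k → Fin (n + 1)) :
    (EuclideanSpace ℝ (Fin (n + 1))) [⋀^Fin k]→ₗ[ℝ] ℝ :=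
  (Matrix.detRowAlternating : (Fin k → ℝ) [⋀^Fin k]→ₗ[ℝ] ℝ).compLinearMap
    (LinearMap.pi fun j => (EuclideanSpace.proj (f j) :
      EuclideanSpace ℝ (Fin (n + 1)) →L[ℝ] ℝ).toLinearMap)

theorem Dmap_apply (f : Fin k → Fin (n + 1)) (v : Fin k → EuclideanSpace ℝ (Fin (n + 1))) :
    Dmap n k f v = Matrix.det (Matrix.of fun i j => v i (f j)) := rfl

noncomputable def Phi (n k : ℕ) (v : Fin k → EuclideanSpace ℝ (Fin (n + 1))) :
    EuclideanSpace ℝ (Fin k → Fin (n + 1)) :=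
  WithLp.toLp 2 (fun f => Dmap n k f v)

theorem Phi_norm_le (v : Fin k → EuclideanSpace ℝ (Fin (n + 1))) :
    ‖Phi n k v‖ ≤ Real.sqrt ((n + 1) ^ k) * ((k.factorial : ℝ) * ∏ i, ‖v i‖) := by
  have hB : (0:ℝ) ≤ (k.factorial : ℝ) * ∏ i, ‖v i‖ := by positivity
  have hf : ∀ f : Fin k → Fin (n + 1), |Dmap n k f v| ≤ (k.factorial : ℝ) * ∏ i, ‖v i‖ := by
    intro f
    rw [Dmap_apply]
    exact det_row_bound _ _ (fun i => norm_nonneg _) (fun i j => coord_le_norm (v i) (f j))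
  rw [EuclideanSpace.norm_eq]
  have : ∑ f : Fin k → Fin (n + 1), ‖Phi n k v f‖ ^ 2
      ≤ ∑ _f : Fin k → Fin (n + 1), ((k.factorial : ℝ) * ∏ i, ‖v i‖) ^ 2 := by
    refine Finset.sum_le_sum fun f _ => ?_
    rw [Real.norm_eq_abs]
    exact pow_le_pow_left₀ (abs_nonneg _) (hf f) 2
  refine (Real.sqrt_le_sqrt this).trans ?_
  rw [Finset.sum_const, Finset.card_univ, nsmul_eq_mul, Real.sqrt_mul (by positivity),
    Real.sqrt_sq hB]
  simp [Fintype.card_fun]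

end Main

set_option maxHeartbeats 2000000 in
/-- Let `ξ` be a unit vector in `ℝ^{n+1}`.  For `1 ≤ k ≤ n+1` there is a
constant `C > 0` depending only on `n` and `k` such that, for all `x₁, …, x_k`,
`‖x₁ ∧ ⋯ ∧ x_k‖ ≤ C Σᵢ ‖xᵢ‖ Πⱼ≠ᵢ ‖xⱼ ∧ ξ‖`, where the norm of a wedge product is the
square root of the corresponding Gram determinant and
`‖x ∧ ξ‖ = √(‖x‖²‖ξ‖² - (x·ξ)²)`. -/
theorem stmt19 (n k : ℕ) (hk1 : 1 ≤ k) (hk2 : k ≤ n + 1) :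
    ∃ C : ℝ, 0 < C ∧ ∀ (ξ : EuclideanSpace ℝ (Fin (n + 1))), ‖ξ‖ = 1 →
      ∀ x : Fin k → EuclideanSpace ℝ (Fin (n + 1)),
        Real.sqrt (Matrix.det (Matrix.of fun i j => ⟪x i, x j⟫)) ≤
          C * ∑ i, ‖x i‖ * ∏ j ∈ Finset.univ.erase i,
            Real.sqrt (‖x j‖ ^ 2 * ‖ξ‖ ^ 2 - ⟪x j, ξ⟫ ^ 2) := by
  classical
  refine ⟨2 * Real.sqrt ((n + 1) ^ k) * (k.factorial : ℝ), by positivity, ?_⟩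
  intro ξ hξ x
  set a : Fin k → ℝ := fun i => ⟪x i, ξ⟫ with ha
  set Δ : Fin k → EuclideanSpace ℝ (Fin (n + 1)) := fun i => x i - a i • ξ with hΔ
  -- norms of Δ
  have hΔsq : ∀ j, ‖Δ j‖ ^ 2 = ‖x j‖ ^ 2 - a j ^ 2 := by
    intro j
    have h1 : ‖x j - a j • ξ‖ ^ 2 = ‖x j‖ ^ 2 - 2 * ⟪x j, a j • ξ⟫ + ‖a j • ξ‖ ^ 2 :=
      norm_sub_sq_real _ _
    have h2 : ⟪x j, a j • ξ⟫ = a j * a j := by rw [real_inner_smul_right]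
    have h3 : ‖a j • ξ‖ = |a j| := by rw [norm_smul, hξ, mul_one, Real.norm_eq_abs]
    rw [hΔ]
    simp only [h1, h2, h3, sq_abs]
    ring
  have hr : ∀ j, Real.sqrt (‖x j‖ ^ 2 * ‖ξ‖ ^ 2 - ⟪x j, ξ⟫ ^ 2) = ‖Δ j‖ := by
    intro j
    rw [hξ, one_pow, mul_one, show (⟪x j, ξ⟫ : ℝ) = a j from rfl, ← hΔsq j,
      Real.sqrt_sq (norm_nonneg _)]
  -- decomposition of Phi
  have hxdecomp : x = fun i => Δ i + a i • ξ := by funext i; simp [hΔ]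
  have hPhiX : Phi n k x = Phi n k Δ + ∑ i, a i • Phi n k (Function.update Δ i ξ) := by
    ext f
    have h1 := alt_expand (Dmap n k f) Δ a ξ
    have h2 : Phi n k x f = Dmap n k f (fun i => Δ i + a i • ξ) := by rw [hxdecomp]; rfl
    have h3 : (Phi n k Δ + ∑ i, a i • Phi n k (Function.update Δ i ξ)) f
        = Phi n k Δ f + ∑ i, a i * (Phi n k (Function.update Δ i ξ) f) := by
      rw [PiLp.add_apply]
      congr 1
      rw [WithLp.ofLp_sum, Finset.sum_apply]
      exact Finset.sum_congr rfl fun i _ => rfl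
    rw [h2, h1, h3]
    rfl
  -- Gram matrix and Cauchy-Binet
  set G : Matrix (Fin k) (Fin k) ℝ := Matrix.of fun i j => ⟪x i, x j⟫ with hG
  set A : Matrix (Fin k) (Fin (n + 1)) ℝ := Matrix.of fun i t => x i t with hA
  have hAG : G = A * Aᵀ := by
    ext i j
    simp only [hG, hA, Matrix.mul_apply, Matrix.transpose_apply, Matrix.of_apply]
    rw [PiLp.inner_apply]
    simp [RCLike.inner_apply, mul_comm]
  have hCB : (k.factorial : ℝ) * G.det = ∑ f : Fin k → Fin (n + 1), (Dmap n k f x) ^ 2 := by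
    rw [hAG]
    have hcb := cb A
    rw [Fintype.card_fin] at hcb
    rw [hcb]
    refine Finset.sum_congr rfl fun f _ => rfl
  have hGnonneg : 0 ≤ G.det := by
    have h0 : 0 ≤ ∑ f : Fin k → Fin (n + 1), (Dmap n k f x) ^ 2 :=
      Finset.sum_nonneg fun f _ => sq_nonneg _
    have hkf : (0:ℝ) < (k.factorial : ℝ) := by positivity
    nlinarith
  have hnorm : ‖Phi n k x‖ = Real.sqrt ((k.factorial : ℝ) * G.det) := by
    rw [EuclideanSpace.norm_eq, hCB]
    congr 1
    refine Finset.sum_congr rfl fun f _ => ?_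
    rw [Real.norm_eq_abs, sq_abs]
    rfl
  have h_first : Real.sqrt G.det ≤ ‖Phi n k x‖ := by
    rw [hnorm]
    apply Real.sqrt_le_sqrt
    have hkf : (1:ℝ) ≤ (k.factorial : ℝ) := by
      exact_mod_cast Nat.one_le_iff_ne_zero.mpr (Nat.factorial_ne_zero k)
    nlinarith
  -- triangle inequality
  have htri : ‖Phi n k x‖ ≤ ‖Phi n k Δ‖ + ∑ i, |a i| * ‖Phi n k (Function.update Δ i ξ)‖ := by
    rw [hPhiX]
    refine (norm_add_le _ _).trans (add_le_add_right ?_ _)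
    refine (norm_sum_le _ _).trans (le_of_eq ?_)
    refine Finset.sum_congr rfl fun i _ => ?_
    rw [norm_smul, Real.norm_eq_abs]
  set c : ℝ := Real.sqrt ((n + 1) ^ k) * (k.factorial : ℝ) with hc
  have hc0 : (0:ℝ) ≤ c := by positivity
  have hΔbound : ‖Phi n k Δ‖ ≤ c * ∏ i, ‖Δ i‖ := by
    have h1 := Phi_norm_le Δ
    rw [← mul_assoc] at h1
    exact h1
  have hupd : ∀ i : Fin k, ‖Phi n k (Function.update Δ i ξ)‖
      ≤ c * ∏ j ∈ Finset.univ.erase i, ‖Δ j‖ := by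
    intro i
    have h1 := Phi_norm_le (Function.update Δ i ξ)
    have h2 : ∏ j, ‖Function.update Δ i ξ j‖ = ∏ j ∈ Finset.univ.erase i, ‖Δ j‖ := by
      have h4 : (fun j => ‖Function.update Δ i ξ j‖)
          = Function.update (fun j => ‖Δ j‖) i ‖ξ‖ := by
        funext j
        exact Function.apply_update (fun _ v => ‖v‖) Δ i ξ j
      rw [h4, Finset.prod_update_of_mem (Finset.mem_univ i), hξ, one_mul,
        Finset.sdiff_singleton_eq_erase]
    rw [h2, ← mul_assoc] at h1
    exact h1
  have hai : ∀ i, |a i| ≤ ‖x i‖ := fun i => by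
    have h1 := abs_real_inner_le_norm (x i) ξ
    rwa [hξ, mul_one] at h1
  have hΔle : ∀ j, ‖Δ j‖ ≤ ‖x j‖ := by
    intro j
    nlinarith [hΔsq j, norm_nonneg (Δ j), norm_nonneg (x j), sq_nonneg (a j)]
  have hprod : ∏ i, ‖Δ i‖ ≤ ‖x ⟨0, hk1⟩‖ * ∏ j ∈ Finset.univ.erase ⟨0, hk1⟩, ‖Δ j‖ := by
    rw [← Finset.mul_prod_erase Finset.univ _ (Finset.mem_univ (⟨0, hk1⟩ : Fin k))]
    exact mul_le_mul_of_nonneg_right (hΔle _) (Finset.prod_nonneg fun j _ => norm_nonneg _)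
  set S : ℝ := ∑ i, ‖x i‖ * ∏ j ∈ Finset.univ.erase i, ‖Δ j‖ with hS
  have hS0 : ‖x ⟨0, hk1⟩‖ * ∏ j ∈ Finset.univ.erase ⟨0, hk1⟩, ‖Δ j‖ ≤ S := by
    rw [hS]
    exact Finset.single_le_sum (f := fun i => ‖x i‖ * ∏ j ∈ Finset.univ.erase i, ‖Δ j‖)
      (fun i _ => mul_nonneg (norm_nonneg _) (Finset.prod_nonneg fun j _ => norm_nonneg _))
      (Finset.mem_univ _)
  have hsum : ∑ i, |a i| * ‖Phi n k (Function.update Δ i ξ)‖ ≤ c * S := by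
    rw [hS, Finset.mul_sum]
    refine Finset.sum_le_sum fun i _ => ?_
    calc |a i| * ‖Phi n k (Function.update Δ i ξ)‖
        ≤ ‖x i‖ * (c * ∏ j ∈ Finset.univ.erase i, ‖Δ j‖) :=
          mul_le_mul (hai i) (hupd i) (norm_nonneg _) (norm_nonneg _)
      _ = c * (‖x i‖ * ∏ j ∈ Finset.univ.erase i, ‖Δ j‖) := by ring
  have hgoal : ∑ i, ‖x i‖ * ∏ j ∈ Finset.univ.erase i,
      Real.sqrt (‖x j‖ ^ 2 * ‖ξ‖ ^ 2 - ⟪x j, ξ⟫ ^ 2) = S := by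
    refine Finset.sum_congr rfl fun i _ => ?_
    rw [Finset.prod_congr rfl fun j _ => hr j]
  rw [hgoal]
  have hSnonneg : (0:ℝ) ≤ S := by
    rw [hS]
    exact Finset.sum_nonneg fun i _ =>
      mul_nonneg (norm_nonneg _) (Finset.prod_nonneg fun j _ => norm_nonneg _)
  calc Real.sqrt G.det ≤ ‖Phi n k x‖ := h_first
    _ ≤ ‖Phi n k Δ‖ + ∑ i, |a i| * ‖Phi n k (Function.update Δ i ξ)‖ := htri
    _ ≤ c * (∏ i, ‖Δ i‖) + c * S := add_le_add hΔbound hsum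
    _ ≤ c * S + c * S := by
        have h5 := hprod.trans hS0
        nlinarith
    _ = 2 * Real.sqrt ((n + 1) ^ k) * (k.factorial : ℝ) * S := by rw [hc]; ring
end
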